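/- arXiv:1612.05458 — 5 statements merged into one kernel-verified Lean document; each statement's English description precedes it below -/
import Mathlib

section
/- Let q : ℤ → ℝ be nonnegative and finitely supported, and let H be the guided Schrödinger operator on ℓ²(ℤ²) associated with q. Then the interval [0, 8] is contained in the real spectrum of H, i.e., for every x ∈ [0,8] one has (x : ℂ) ∈ spectrum ℂ H. -/
/-!
Weyl sequences. For `x = 4 - 2 cos θ₁ - 2 cos θ₂` the plane wave `exp (i (θ₁ m₁ + θ₂ m₂))` solves
the free equation `(x - Δ) u = 0` pointwise. Cut off to an `n × n` box lying above the bounded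
support of `q`, where `H` acts as the free Laplacian, it has norm `n`, while `(x - H)` of it only
lives on the boundary of the box and has norm `O(√n)`. Hence `x - H` is not bounded below, so
not invertible, and every `x ∈ [0, 8]` is of this form.
-/

open Finset

theorem mem_spectrum_of_forall_exists_norm_lt {𝕜 E : Type*} [NontriviallyNormedField 𝕜]
    [NormedAddCommGroup E] [NormedSpace 𝕜 E] (A : E →L[𝕜] E) (a : 𝕜)
    (h : ∀ C : ℝ, ∃ f : E, C * ‖(algebraMap 𝕜 (E →L[𝕜] E) a - A) f‖ < ‖f‖) :
    a ∈ spectrum 𝕜 A := by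
  rw [spectrum.mem_iff]
  rintro ⟨u, hu⟩
  obtain ⟨f, hf⟩ := h ‖(↑u⁻¹ : E →L[𝕜] E)‖
  have hf' : (↑u⁻¹ * ↑u : E →L[𝕜] E) f = f := by rw [u.inv_mul]; rfl
  rw [← hu] at hf
  refine hf.not_ge ?_
  calc ‖f‖ = ‖(↑u⁻¹ : E →L[𝕜] E) ((u : E →L[𝕜] E) f)‖ := congrArg norm hf'.symm
    _ ≤ _ := ContinuousLinearMap.le_opNorm _ _

theorem memℓp_of_eq_zero_of_notMem {ι : Type*} {E : ι → Type*} [∀ i, NormedAddCommGroup (E i)]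
    {f : ∀ i, E i} (p : ENNReal) (s : Finset ι) (hf : ∀ i ∉ s, f i = 0) : Memℓp f p :=
  (memℓp_zero (s.finite_toSet.subset fun i hi => by_contra fun h => hi (hf i h))).of_exponent_ge
    zero_le

theorem lp.norm_sq_eq_sum {ι : Type*} {E : ι → Type*} [∀ i, NormedAddCommGroup (E i)]
    (f : lp E 2) (s : Finset ι) (hf : ∀ i ∉ s, f i = 0) : ‖f‖ ^ 2 = ∑ i ∈ s, ‖f i‖ ^ 2 := by
  have h := lp.norm_rpow_eq_tsum (by norm_num : 0 < (2 : ENNReal).toReal) f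
  simp only [ENNReal.toReal_ofNat, Real.rpow_two] at h
  rw [h, tsum_eq_sum fun i hi => by simp [hf i hi]]

theorem Finset.sum_le_card_mul_of_eq_zero_of_notMem {ι : Type*} [DecidableEq ι]
    (s t : Finset ι) {g : ι → ℝ} {c : ℝ} (hg : ∀ i, 0 ≤ g i) (hgt : ∀ i ∉ t, g i = 0)
    (hc : ∀ i ∈ t, g i ≤ c) :
    ∑ i ∈ s, g i ≤ #t * c :=
  calc ∑ i ∈ s, g i ≤ ∑ i ∈ s ∪ t, g i :=
        sum_le_sum_of_subset_of_nonneg subset_union_left fun i _ _ => hg i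
    _ = ∑ i ∈ t, g i := (sum_subset subset_union_right fun i _ hi => hgt i hi).symm
    _ ≤ #t * c := by simpa using sum_le_card_nsmul t g c hc

theorem Complex.exp_add_exp_eq_two_cos_mul (θ : ℝ) (y : ℂ) :
    Complex.exp (θ * (y + 1) * Complex.I) + Complex.exp (θ * (y - 1) * Complex.I)
      = 2 * Real.cos θ * Complex.exp (θ * y * Complex.I) := by
  rw [Complex.ofReal_cos, Complex.two_cos, add_mul, ← Complex.exp_add, ← Complex.exp_add]
  ring_nf

noncomputable def truncatedWave (θ : ℝ) (a : ℤ) (n : ℕ) (k : ℤ) : ℂ :=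
  if k ∈ Ico a (a + n) then Complex.exp (θ * k * Complex.I) else 0

noncomputable def adjacencyResidual (θ : ℝ) (u : ℤ → ℂ) (k : ℤ) : ℂ :=
  u (k + 1) + u (k - 1) - 2 * Real.cos θ * u k

section TruncatedWave

variable (θ : ℝ) (a : ℤ) (n : ℕ)

theorem truncatedWave_of_notMem (k : ℤ) (hk : k ∉ Ico a (a + n)) :
    truncatedWave θ a n k = 0 :=
  if_neg hk

theorem truncatedWave_of_notMem_Icc (k : ℤ) (hk : k ∉ Icc (a - 1) (a + n)) :
    truncatedWave θ a n k = 0 :=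
  truncatedWave_of_notMem θ a n k fun h => hk (by simp only [mem_Ico, mem_Icc] at h ⊢; omega)

theorem norm_truncatedWave_of_mem {k : ℤ} (hk : k ∈ Ico a (a + n)) :
    ‖truncatedWave θ a n k‖ = 1 := by
  rw [truncatedWave, if_pos hk, ← Complex.ofReal_intCast, ← Complex.ofReal_mul,
    Complex.norm_exp_ofReal_mul_I]

theorem norm_truncatedWave_le_one (k : ℤ) : ‖truncatedWave θ a n k‖ ≤ 1 := by
  by_cases hk : k ∈ Ico a (a + n)
  · exact (norm_truncatedWave_of_mem θ a n hk).le
  · simp [truncatedWave_of_notMem θ a n k hk]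

theorem sum_norm_sq_truncatedWave :
    ∑ k ∈ Ico a (a + n), ‖truncatedWave θ a n k‖ ^ 2 = n := by
  rw [sum_congr rfl fun k hk => by rw [norm_truncatedWave_of_mem θ a n hk, one_pow]]
  simp

theorem sum_norm_sq_truncatedWave_le (s : Finset ℤ) :
    ∑ k ∈ s, ‖truncatedWave θ a n k‖ ^ 2 ≤ n := by
  simpa using s.sum_le_card_mul_of_eq_zero_of_notMem (Ico a (a + n)) (fun _ => by positivity)
    (fun k hk => by simp [truncatedWave_of_notMem θ a n k hk])
    (fun k _ => pow_le_one₀ (norm_nonneg _) (norm_truncatedWave_le_one θ a n k))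

theorem norm_adjacencyResidual_le {u : ℤ → ℂ} (hu : ∀ k, ‖u k‖ ≤ 1) (k : ℤ) :
    ‖adjacencyResidual θ u k‖ ≤ 4 := by
  have hcos : ‖(2 * Real.cos θ : ℂ)‖ ≤ 2 := by
    rw [← Complex.ofReal_ofNat, ← Complex.ofReal_mul, Complex.norm_real, Real.norm_eq_abs,
      abs_mul, abs_two]
    linarith [Real.abs_cos_le_one θ]
  calc ‖adjacencyResidual θ u k‖
      ≤ ‖u (k + 1)‖ + ‖u (k - 1)‖ + ‖(2 * Real.cos θ : ℂ)‖ * ‖u k‖ := by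
        rw [adjacencyResidual, ← norm_mul]; exact norm_sub_le_of_le (norm_add_le _ _) le_rfl
    _ ≤ 1 + 1 + 2 * 1 := by gcongr <;> exact hu _
    _ = 4 := by norm_num

theorem adjacencyResidual_truncatedWave_of_notMem (k : ℤ)
    (hk : k ∉ ({a - 1, a, a + n - 1, a + n} : Finset ℤ)) :
    adjacencyResidual θ (truncatedWave θ a n) k = 0 := by
  simp only [mem_insert, mem_singleton, not_or] at hk
  rw [adjacencyResidual]
  by_cases hin : a ≤ k ∧ k < a + n
  · have hmem : ∀ j : ℤ, k - 1 ≤ j → j ≤ k + 1 → j ∈ Ico a (a + n) := fun j _ _ => by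
      simp only [mem_Ico]; omega
    simp only [truncatedWave, if_pos (hmem k (by omega) (by omega)),
      if_pos (hmem (k + 1) (by omega) le_rfl), if_pos (hmem (k - 1) le_rfl (by omega)),
      Int.cast_add, Int.cast_sub, Int.cast_one]
    rw [Complex.exp_add_exp_eq_two_cos_mul, sub_self]
  · simp only [truncatedWave, mem_Ico]
    rw [if_neg (by omega), if_neg (by omega), if_neg (by omega)]
    ring

theorem adjacencyResidual_truncatedWave_of_notMem_Icc (k : ℤ) (hk : k ∉ Icc (a - 1) (a + n)) :
    adjacencyResidual θ (truncatedWave θ a n) k = 0 :=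
  adjacencyResidual_truncatedWave_of_notMem θ a n k fun h => hk (by
    simp only [mem_insert, mem_singleton, mem_Icc] at h ⊢; omega)

theorem sum_norm_sq_adjacencyResidual_truncatedWave_le (s : Finset ℤ) :
    ∑ k ∈ s, ‖adjacencyResidual θ (truncatedWave θ a n) k‖ ^ 2 ≤ 64 := by
  have hcard : #({a - 1, a, a + n - 1, a + n} : Finset ℤ) ≤ 4 := card_le_four
  calc ∑ k ∈ s, ‖adjacencyResidual θ (truncatedWave θ a n) k‖ ^ 2
      ≤ #({a - 1, a, a + n - 1, a + n} : Finset ℤ) * 4 ^ 2 :=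
        s.sum_le_card_mul_of_eq_zero_of_notMem _ (fun _ => by positivity)
          (fun k hk => by simp [adjacencyResidual_truncatedWave_of_notMem θ a n k hk])
          (fun k _ => pow_le_pow_left₀ (norm_nonneg _)
            (norm_adjacencyResidual_le θ (norm_truncatedWave_le_one θ a n) k) 2)
    _ ≤ 4 * 4 ^ 2 := by gcongr; exact_mod_cast hcard
    _ = 64 := by norm_num

end TruncatedWave

theorem mul_eq_zero_of_notMem_product {ι κ R : Type*} [MulZeroClass R] {u : ι → R} {v : κ → R}
    {s : Finset ι} {t : Finset κ} (hu : ∀ i ∉ s, u i = 0) (hv : ∀ j ∉ t, v j = 0) {m : ι × κ}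
    (hm : m ∉ s ×ˢ t) : u m.1 * v m.2 = 0 := by
  rw [mem_product, not_and_or] at hm
  rcases hm with h | h
  · rw [hu _ h, zero_mul]
  · rw [hv _ h, mul_zero]

theorem sum_product_norm_sq_mul {ι κ R : Type*} [NormedRing R] [NormMulClass R] (s : Finset ι)
    (t : Finset κ) (u : ι → R) (v : κ → R) :
    ∑ m ∈ s ×ˢ t, ‖u m.1 * v m.2‖ ^ 2 = (∑ i ∈ s, ‖u i‖ ^ 2) * ∑ j ∈ t, ‖v j‖ ^ 2 := by
  simp only [sum_product, sum_mul_sum, norm_mul, mul_pow]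

local notation "ℓ²ℤ²" => lp (fun _ : ℤ × ℤ => ℂ) 2

def IsGuidedSchrodinger (q : ℤ → ℝ) (H : ℓ²ℤ² →L[ℂ] ℓ²ℤ²) : Prop :=
  ∀ (f : ℓ²ℤ²) (m₁ m₂ : ℤ),
    H f (m₁, m₂) = 4 * f (m₁, m₂) - f (m₁ + 1, m₂) - f (m₁ - 1, m₂)
      - f (m₁, m₂ + 1) - f (m₁, m₂ - 1) - (q m₂ : ℂ) * f (m₁, m₂)

noncomputable def waveBox (θ₁ θ₂ : ℝ) (L : ℤ) (n : ℕ) : ℓ²ℤ² :=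
  ⟨fun m => truncatedWave θ₁ L n m.1 * truncatedWave θ₂ L n m.2,
    memℓp_of_eq_zero_of_notMem 2 (Ico L (L + n) ×ˢ Ico L (L + n)) fun _ hm =>
      mul_eq_zero_of_notMem_product (truncatedWave_of_notMem θ₁ L n)
        (truncatedWave_of_notMem θ₂ L n) hm⟩

theorem waveBox_apply (θ₁ θ₂ : ℝ) (L : ℤ) (n : ℕ) (m : ℤ × ℤ) :
    waveBox θ₁ θ₂ L n m = truncatedWave θ₁ L n m.1 * truncatedWave θ₂ L n m.2 :=
  rfl

theorem norm_sq_waveBox (θ₁ θ₂ : ℝ) (L : ℤ) (n : ℕ) : ‖waveBox θ₁ θ₂ L n‖ ^ 2 = n ^ 2 := by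
  rw [lp.norm_sq_eq_sum (waveBox θ₁ θ₂ L n) (Ico L (L + n) ×ˢ Ico L (L + n)) fun _ hm =>
      mul_eq_zero_of_notMem_product (truncatedWave_of_notMem θ₁ L n)
        (truncatedWave_of_notMem θ₂ L n) hm]
  simp only [waveBox_apply]
  rw [sum_product_norm_sq_mul, sum_norm_sq_truncatedWave, sum_norm_sq_truncatedWave, sq]

theorem guided_sub_apply_of_mul {q : ℤ → ℝ} {H : ℓ²ℤ² →L[ℂ] ℓ²ℤ²}
    (hH : IsGuidedSchrodinger q H) (θ₁ θ₂ : ℝ) {u v : ℤ → ℂ} (hqv : ∀ k, (q k : ℂ) * v k = 0) {f : ℓ²ℤ²}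
    (hf : ∀ m, f m = u m.1 * v m.2) (m : ℤ × ℤ) :
    (algebraMap ℂ (ℓ²ℤ² →L[ℂ] ℓ²ℤ²) (4 - 2 * Real.cos θ₁ - 2 * Real.cos θ₂) - H) f m
      = adjacencyResidual θ₁ u m.1 * v m.2 + u m.1 * adjacencyResidual θ₂ v m.2 := by
  obtain ⟨m₁, m₂⟩ := m
  rw [sub_apply, lp.coeFn_sub, Pi.sub_apply, Algebra.algebraMap_eq_smul_one, smul_apply,
    one_apply_eq_self, lp.coeFn_smul, Pi.smul_apply, smul_eq_mul, hH]
  simp only [hf, adjacencyResidual]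
  linear_combination u m₁ * hqv m₂

theorem norm_sq_guided_sub_waveBox_le {q : ℤ → ℝ} {H : ℓ²ℤ² →L[ℂ] ℓ²ℤ²}
    (hH : IsGuidedSchrodinger q H) {L : ℤ} (hL : ∀ k, L ≤ k → q k = 0) (θ₁ θ₂ : ℝ) (n : ℕ) :
    ‖(algebraMap ℂ (ℓ²ℤ² →L[ℂ] ℓ²ℤ²) (4 - 2 * Real.cos θ₁ - 2 * Real.cos θ₂) - H)
      (waveBox θ₁ θ₂ L n)‖ ^ 2 ≤ 256 * n := by
  set u := truncatedWave θ₁ L n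
  set v := truncatedWave θ₂ L n
  have hqv : ∀ k, (q k : ℂ) * v k = 0 := fun k => by
    by_cases hk : L ≤ k
    · rw [hL k hk, Complex.ofReal_zero, zero_mul]
    · rw [show v k = 0 from truncatedWave_of_notMem θ₂ L n k (by simp only [mem_Ico]; omega),
        mul_zero]
  have hg := guided_sub_apply_of_mul hH θ₁ θ₂ hqv (waveBox_apply θ₁ θ₂ L n)
  set W := Icc (L - 1) (L + n)
  have hW : ∀ m ∉ W ×ˢ W, (algebraMap ℂ (ℓ²ℤ² →L[ℂ] ℓ²ℤ²)
      (4 - 2 * Real.cos θ₁ - 2 * Real.cos θ₂) - H) (waveBox θ₁ θ₂ L n) m = 0 := fun m hm => by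
    rw [hg, mul_eq_zero_of_notMem_product (adjacencyResidual_truncatedWave_of_notMem_Icc θ₁ L n)
      (truncatedWave_of_notMem_Icc θ₂ L n) hm, mul_eq_zero_of_notMem_product
      (truncatedWave_of_notMem_Icc θ₁ L n) (adjacencyResidual_truncatedWave_of_notMem_Icc θ₂ L n)
      hm, add_zero]
  rw [lp.norm_sq_eq_sum _ (W ×ˢ W) hW]
  calc _ ≤ ∑ m ∈ W ×ˢ W, 2 * (‖adjacencyResidual θ₁ u m.1 * v m.2‖ ^ 2
          + ‖u m.1 * adjacencyResidual θ₂ v m.2‖ ^ 2) := sum_le_sum fun m _ => by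
        rw [hg]; exact (pow_le_pow_left₀ (norm_nonneg _) (norm_add_le _ _) 2).trans add_sq_le
    _ = 2 * ((∑ k ∈ W, ‖adjacencyResidual θ₁ u k‖ ^ 2) * ∑ k ∈ W, ‖v k‖ ^ 2)
          + 2 * ((∑ k ∈ W, ‖u k‖ ^ 2) * ∑ k ∈ W, ‖adjacencyResidual θ₂ v k‖ ^ 2) := by
      rw [← mul_sum, sum_add_distrib, sum_product_norm_sq_mul, sum_product_norm_sq_mul, mul_add]
    _ ≤ 2 * (64 * n) + 2 * (n * 64) := by
      gcongr
      · exact sum_norm_sq_adjacencyResidual_truncatedWave_le θ₁ L n W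
      · exact sum_norm_sq_truncatedWave_le θ₂ L n W
      · exact sum_norm_sq_truncatedWave_le θ₁ L n W
      · exact sum_norm_sq_adjacencyResidual_truncatedWave_le θ₂ L n W
    _ = 256 * n := by ring

theorem guided_mem_spectrum {q : ℤ → ℝ} {H : ℓ²ℤ² →L[ℂ] ℓ²ℤ²}
    (hH : IsGuidedSchrodinger q H) {L : ℤ} (hL : ∀ k, L ≤ k → q k = 0) (θ₁ θ₂ : ℝ) :
    (4 - 2 * Real.cos θ₁ - 2 * Real.cos θ₂ : ℂ) ∈ spectrum ℂ H := by
  refine mem_spectrum_of_forall_exists_norm_lt H _ fun C => ?_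
  obtain ⟨n, hn⟩ := exists_nat_gt (256 * C ^ 2)
  refine ⟨waveBox θ₁ θ₂ L n, abs_lt_of_sq_lt_sq' ?_ (norm_nonneg _) |>.2⟩
  have hres := norm_sq_guided_sub_waveBox_le hH hL θ₁ θ₂ n
  calc (C * ‖_‖) ^ 2 ≤ C ^ 2 * (256 * n) := by rw [mul_pow]; gcongr
    _ < (n : ℝ) * n := by nlinarith [sq_nonneg C]
    _ = ‖waveBox θ₁ θ₂ L n‖ ^ 2 := by rw [norm_sq_waveBox, sq]

theorem guided_contains_unperturbed_spectrum_general
    (q : ℤ → ℝ) (hqfin : (Function.support q).Finite)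
    (H : lp (fun _ : ℤ × ℤ => ℂ) 2 →L[ℂ] lp (fun _ : ℤ × ℤ => ℂ) 2)
    (hH : ∀ (f : lp (fun _ : ℤ × ℤ => ℂ) 2) (m₁ m₂ : ℤ),
      H f (m₁, m₂) = 4 * f (m₁, m₂) - f (m₁ + 1, m₂) - f (m₁ - 1, m₂)
        - f (m₁, m₂ + 1) - f (m₁, m₂ - 1) - (q m₂ : ℂ) * f (m₁, m₂)) :
    ∀ x ∈ Set.Icc (0 : ℝ) 8, (x : ℂ) ∈ spectrum ℂ H := by
  rintro x ⟨hx0, hx8⟩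
  obtain ⟨b, hb⟩ := hqfin.bddAbove
  have hL : ∀ k, b + 1 ≤ k → q k = 0 := fun k hk =>
    Function.notMem_support.mp fun h => by linarith [hb h]
  have hcos : Real.cos (Real.arccos (1 - x / 4)) = 1 - x / 4 :=
    Real.cos_arccos (by linarith) (by linarith)
  have hx := guided_mem_spectrum hH hL (Real.arccos (1 - x / 4)) (Real.arccos (1 - x / 4))
  rwa [hcos, show (4 - 2 * ((1 - x / 4 : ℝ) : ℂ) - 2 * ((1 - x / 4 : ℝ) : ℂ))
    = x by push_cast; ring] at hx

/-- The guided band statement on the square lattice: the unperturbed spectrum `[0,8]`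
is contained in the real spectrum of the guided Schrödinger operator `H`. -/
theorem guided_contains_unperturbed_spectrum
    (q : ℤ → ℝ) (hq : ∀ n, 0 ≤ q n) (hqfin : (Function.support q).Finite)
    (H : lp (fun _ : ℤ × ℤ => ℂ) 2 →L[ℂ] lp (fun _ : ℤ × ℤ => ℂ) 2)
    (hH : ∀ (f : lp (fun _ : ℤ × ℤ => ℂ) 2) (m₁ m₂ : ℤ),
      H f (m₁, m₂) = 4 * f (m₁, m₂) - f (m₁ + 1, m₂) - f (m₁ - 1, m₂)
        - f (m₁, m₂ + 1) - f (m₁, m₂ - 1) - (q m₂ : ℂ) * f (m₁, m₂)) :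
    ∀ x ∈ Set.Icc (0 : ℝ) 8, (x : ℂ) ∈ spectrum ℂ H :=
  guided_contains_unperturbed_spectrum_general q hqfin H hH
end

section
/- Let 𝓗 be a complex Hilbert space and let A, Q : 𝓗 →L[ℂ] 𝓗 be bounded operators such that Re⟨x, A x⟩ ≥ 0 for all x ∈ 𝓗 and the range of Q is finite-dimensional with finrank ℂ (range Q) = p. Then every subspace W ⊆ 𝓗 on which the quadratic form of A − Q is strictly negative, i.e., Re⟨x, (A − Q) x⟩ < 0 for every nonzero x ∈ W, is finite-dimensional of dimension at most p. -/
/-- If `A` has nonnegative quadratic form and `Q` has finite rank `p`, then any subspace on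
which the quadratic form of `A - Q` is strictly negative has dimension at most `p`. -/
theorem neg_subspace_finrank_le_rank {𝓗 : Type*} [NormedAddCommGroup 𝓗]
    [InnerProductSpace ℂ 𝓗] [CompleteSpace 𝓗]
    (A Q : 𝓗 →L[ℂ] 𝓗) (p : ℕ)
    (hA : ∀ x : 𝓗, 0 ≤ (inner (𝕜 := ℂ) x (A x)).re)
    (hQfin : FiniteDimensional ℂ (LinearMap.range (Q : 𝓗 →ₗ[ℂ] 𝓗)))
    (hQrank : Module.finrank ℂ (LinearMap.range (Q : 𝓗 →ₗ[ℂ] 𝓗)) = p)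
    (W : Submodule ℂ 𝓗)
    (hW : ∀ x ∈ W, x ≠ 0 → (inner (𝕜 := ℂ) x ((A - Q) x)).re < 0) :
    FiniteDimensional ℂ W ∧ Module.finrank ℂ W ≤ p := by
  set R := LinearMap.range (Q : 𝓗 →ₗ[ℂ] 𝓗)
  let f : W →ₗ[ℂ] R :=
    { toFun := fun x => ⟨Q x, LinearMap.mem_range_self _ _⟩
      map_add' := fun x y => by simp
      map_smul' := fun c x => by simp }
  have hf : Function.Injective f := by
    rw [← LinearMap.ker_eq_bot, LinearMap.ker_eq_bot']
    rintro ⟨x, hx⟩ hQx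
    have hQx0 : Q x = 0 := congrArg Subtype.val hQx
    ext
    by_contra hx0
    have := hW x hx hx0
    rw [ContinuousLinearMap.sub_apply, hQx0, sub_zero] at this
    exact absurd this (not_lt.mpr (hA x))
  have hfin : FiniteDimensional ℂ W := Module.Finite.of_injective f hf
  exact ⟨hfin, hQrank ▸ LinearMap.finrank_le_finrank_of_injective hf⟩
end

section
/- Let 𝓗 be an infinite-dimensional complex Hilbert space, let e₁, …, e_p be an orthonormal family in 𝓗, let Q₁• ≥ Q₂• ≥ … ≥ Q_p• > 0 be reals, and let Q : 𝓗 →L[ℂ] 𝓗 be the finite-rank operator Q x = ∑_{i=1}^p Q_i• ⟨e_i, x⟩ e_i. Let A : 𝓗 →L[ℂ] 𝓗 be self-adjoint with 0 ≤ Re⟨x, A x⟩ ≤ ρ · ‖x‖² for all x ∈ 𝓗, where ρ ≥ 0. Then for every j with 1 ≤ j ≤ p, the Courant–Fischer min-max value satisfies −Q_j• ≤ m_j(A − Q) ≤ ρ − Q_j•; in particular, if Q_j• > ρ then m_j(A − Q) < 0. -/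
open Module


/-- The `j`-th Courant–Fischer min-max value of a bounded operator `T`. -/
noncomputable def minMax {𝓗 : Type*} [NormedAddCommGroup 𝓗] [InnerProductSpace ℂ 𝓗]
    (T : 𝓗 →L[ℂ] 𝓗) (j : ℕ) : ℝ :=
  ⨅ W : {W : Submodule ℂ 𝓗 // Module.finrank ℂ W = j},
    ⨆ x : {x : 𝓗 // x ∈ (W : Submodule ℂ 𝓗) ∧ ‖x‖ = 1},
      (inner (𝕜 := ℂ) (x : 𝓗) (T x)).re

/-- Corollary 4.1 (operator form): for the finite-rank potential `Q` with ordered positive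
values `Qv 0 ≥ Qv 1 ≥ … ≥ Qv (p-1) > 0` and `A` self-adjoint with `0 ≤ ⟨x, A x⟩ ≤ ρ‖x‖²`,
one has `−Qv j ≤ m_{j+1}(A − Q) ≤ ρ − Qv j`; in particular `m_{j+1}(A − Q) < 0` whenever
`Qv j > ρ`. -/
theorem minMax_guided_estimate {𝓗 : Type*} [NormedAddCommGroup 𝓗]
    [InnerProductSpace ℂ 𝓗] [CompleteSpace 𝓗] (hinf : ¬ FiniteDimensional ℂ 𝓗)
    (p : ℕ) (e : Fin p → 𝓗) (he : Orthonormal ℂ e)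
    (Qv : Fin p → ℝ) (hQpos : ∀ i, 0 < Qv i)
    (hQmono : ∀ i j : Fin p, i ≤ j → Qv j ≤ Qv i)
    (Q : 𝓗 →L[ℂ] 𝓗)
    (hQ : ∀ x : 𝓗, Q x = ∑ i, ((Qv i : ℂ) * inner (𝕜 := ℂ) (e i) x) • e i)
    (A : 𝓗 →L[ℂ] 𝓗) (hA : IsSelfAdjoint A) (ρ : ℝ) (hρ : 0 ≤ ρ)
    (hA0 : ∀ x : 𝓗, 0 ≤ (inner (𝕜 := ℂ) x (A x)).re)
    (hAρ : ∀ x : 𝓗, (inner (𝕜 := ℂ) x (A x)).re ≤ ρ * ‖x‖ ^ 2) :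
    ∀ j : Fin p,
      (-(Qv j) ≤ minMax (A - Q) ((j : ℕ) + 1) ∧ minMax (A - Q) ((j : ℕ) + 1) ≤ ρ - Qv j) ∧
        (ρ < Qv j → minMax (A - Q) ((j : ℕ) + 1) < 0) := by
  classical
  intro j
  set T := A - Q with hTdef
  -- quadratic form of Q
  have hQquad : ∀ x : 𝓗,
      (inner (𝕜 := ℂ) x (Q x)).re = ∑ i, Qv i * ‖inner (𝕜 := ℂ) (e i) x‖ ^ 2 := by
    intro x
    rw [hQ, inner_sum, Complex.re_sum]
    refine Finset.sum_congr rfl fun i _ => ?_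
    rw [inner_smul_right, ← inner_conj_symm x (e i)]
    rw [mul_assoc, Complex.mul_conj', ← Complex.ofReal_pow, ← Complex.ofReal_mul,
      Complex.ofReal_re]
  have hTquad : ∀ x : 𝓗, (inner (𝕜 := ℂ) x (T x)).re
      = (inner (𝕜 := ℂ) x (A x)).re - ∑ i, Qv i * ‖inner (𝕜 := ℂ) (e i) x‖ ^ 2 := by
    intro x
    rw [hTdef]
    simp only [ContinuousLinearMap.sub_apply, inner_sub_right, Complex.sub_re]
    rw [hQquad]
  -- boundedness of the quadratic form on unit vectors
  have hbdd : ∀ W : {W : Submodule ℂ 𝓗 // finrank ℂ W = (j:ℕ) + 1},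
      BddAbove (Set.range fun x : {x : 𝓗 // x ∈ (W : Submodule ℂ 𝓗) ∧ ‖x‖ = 1} =>
        (inner (𝕜 := ℂ) (x : 𝓗) (T x)).re) := by
    intro W
    refine ⟨‖T‖, ?_⟩
    rintro r ⟨⟨x, hxW, hx1⟩, rfl⟩
    calc (inner (𝕜 := ℂ) x (T x)).re ≤ ‖(inner (𝕜 := ℂ) x (T x) : ℂ)‖ := Complex.re_le_norm _
      _ ≤ ‖x‖ * ‖T x‖ := norm_inner_le_norm _ _
      _ ≤ ‖x‖ * (‖T‖ * ‖x‖) := by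
          exact mul_le_mul_of_nonneg_left (T.le_opNorm x) (norm_nonneg _)
      _ = ‖T‖ := by rw [hx1]; ring
  -- lower bound for each sup
  have key_lb : ∀ W : Submodule ℂ 𝓗, finrank ℂ W = (j:ℕ) + 1 →
      ∃ x : 𝓗, x ∈ W ∧ ‖x‖ = 1 ∧ -(Qv j) ≤ (inner (𝕜 := ℂ) x (T x)).re := by
    intro W hW
    haveI : FiniteDimensional ℂ W := FiniteDimensional.of_finrank_pos (by omega)
    set φ : W →ₗ[ℂ] (Fin (j:ℕ) → ℂ) :=
      LinearMap.pi (fun i => ((innerSL ℂ (e (Fin.castLE j.isLt.le i))).toLinearMap).comp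
        W.subtype) with hφ
    have hker : 0 < finrank ℂ (LinearMap.ker φ) := by
      have h1 := LinearMap.finrank_range_add_finrank_ker φ
      have h2 : finrank ℂ (LinearMap.range φ) ≤ (j:ℕ) := by
        calc finrank ℂ (LinearMap.range φ) ≤ finrank ℂ (Fin (j:ℕ) → ℂ) :=
              Submodule.finrank_le _
          _ = (j:ℕ) := by simp
      omega
    have hnt : Nontrivial (LinearMap.ker φ) := Module.nontrivial_of_finrank_pos hker
    obtain ⟨⟨v, hvker⟩, hvne⟩ := exists_ne (0 : LinearMap.ker φ)
    have hv_ne : (v : 𝓗) ≠ 0 := by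
      intro h
      apply hvne
      ext
      exact h
    have hv0 : ∀ i : Fin (j:ℕ), inner (𝕜 := ℂ) (e (Fin.castLE j.isLt.le i)) (v : 𝓗) = 0 := by
      intro i
      have := LinearMap.mem_ker.mp hvker
      have := congrFun this i
      simpa [hφ] using this
    set x : 𝓗 := ((‖(v : 𝓗)‖⁻¹ : ℝ) : ℂ) • (v : 𝓗) with hx
    have hnx : ‖x‖ = 1 := by
      rw [hx, norm_smul]
      simp [norm_ne_zero_iff.mpr hv_ne]
    have hxW : x ∈ W := W.smul_mem _ v.2
    have hz : ∀ i : Fin p, (i : ℕ) < (j : ℕ) → inner (𝕜 := ℂ) (e i) x = 0 := by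
      intro i hi
      have : e i = e (Fin.castLE j.isLt.le ⟨(i : ℕ), hi⟩) := rfl
      rw [hx, inner_smul_right, this, hv0]
      simp
    refine ⟨x, hxW, hnx, ?_⟩
    have hS : ∑ i, Qv i * ‖inner (𝕜 := ℂ) (e i) x‖ ^ 2 ≤ Qv j := by
      calc ∑ i, Qv i * ‖inner (𝕜 := ℂ) (e i) x‖ ^ 2
          ≤ ∑ i, Qv j * ‖inner (𝕜 := ℂ) (e i) x‖ ^ 2 := by
            refine Finset.sum_le_sum fun i _ => ?_
            rcases lt_or_ge (i : ℕ) (j : ℕ) with hij | hij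
            · rw [hz i hij]; simp
            · exact mul_le_mul_of_nonneg_right (hQmono j i (by exact hij))
                (by positivity)
        _ = Qv j * ∑ i, ‖inner (𝕜 := ℂ) (e i) x‖ ^ 2 := by rw [Finset.mul_sum]
        _ ≤ Qv j * ‖x‖ ^ 2 := mul_le_mul_of_nonneg_left
            (he.sum_inner_products_le x) (hQpos j).le
        _ = Qv j := by rw [hnx]; ring
    have := hA0 x
    rw [hTquad]
    linarith
  -- the test subspace spanned by e 0, ..., e j
  have hjp : (j : ℕ) + 1 ≤ p := j.isLt
  set f : Fin ((j:ℕ)+1) → 𝓗 := fun k => e (Fin.castLE hjp k) with hf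
  have hfon : Orthonormal ℂ f := he.comp _ (Fin.castLE_injective hjp)
  set W₀ : Submodule ℂ 𝓗 := Submodule.span ℂ (Set.range f) with hW₀def
  have hW₀ : finrank ℂ W₀ = (j:ℕ) + 1 := by
    rw [hW₀def, finrank_span_eq_card hfon.linearIndependent]
    simp
  have hub : ∀ x : 𝓗, x ∈ W₀ → ‖x‖ = 1 →
      (inner (𝕜 := ℂ) x (T x)).re ≤ ρ - Qv j := by
    intro x hxW hx1
    obtain ⟨c, hc⟩ := Submodule.mem_span_range_iff_exists_fun ℂ |>.mp hxW
    have hck : ∀ k, inner (𝕜 := ℂ) (f k) x = c k := by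
      intro k
      rw [← hc]
      exact hfon.inner_right_fintype c k
    have hnorm : ∑ k, ‖c k‖ ^ 2 = 1 := by
      have h1 : inner (𝕜 := ℂ) x x = ∑ k, (starRingEnd ℂ) (c k) * c k := by
        conv_lhs => rw [← hc]
        exact hfon.inner_sum c c Finset.univ
      have h2 := congrArg Complex.re h1
      have h3 : (inner (𝕜 := ℂ) x x).re = ‖x‖ ^ 2 := by
        simpa using inner_self_eq_norm_sq (𝕜 := ℂ) x
      rw [h3, hx1, Complex.re_sum] at h2
      have h4 : ∑ k, ‖c k‖ ^ 2 = ∑ k, ((starRingEnd ℂ) (c k) * c k).re :=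
        Finset.sum_congr rfl fun k _ => by
          rw [mul_comm, Complex.mul_conj', ← Complex.ofReal_pow, Complex.ofReal_re]
      rw [h4, ← h2]
      norm_num
    have hS : Qv j ≤ ∑ i, Qv i * ‖inner (𝕜 := ℂ) (e i) x‖ ^ 2 := by
      calc Qv j = Qv j * ∑ k, ‖c k‖ ^ 2 := by rw [hnorm]; ring
        _ = ∑ k, Qv j * ‖c k‖ ^ 2 := Finset.mul_sum _ _ _
        _ ≤ ∑ k, Qv (Fin.castLE hjp k) * ‖c k‖ ^ 2 := by
            refine Finset.sum_le_sum fun k _ => ?_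
            refine mul_le_mul_of_nonneg_right ?_ (by positivity)
            refine hQmono (Fin.castLE hjp k) j ?_
            have : (k : ℕ) ≤ (j : ℕ) := by omega
            simpa [Fin.le_def] using this
        _ = ∑ k, Qv (Fin.castLE hjp k) * ‖inner (𝕜 := ℂ) (e (Fin.castLE hjp k)) x‖ ^ 2 := by
            refine Finset.sum_congr rfl fun k _ => ?_
            rw [show e (Fin.castLE hjp k) = f k from rfl, hck]
        _ = ∑ i ∈ Finset.univ.image (Fin.castLE hjp),
              Qv i * ‖inner (𝕜 := ℂ) (e i) x‖ ^ 2 := by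
            rw [Finset.sum_image (fun a _ b _ h => Fin.castLE_injective hjp h)]
        _ ≤ ∑ i, Qv i * ‖inner (𝕜 := ℂ) (e i) x‖ ^ 2 := by
            refine Finset.sum_le_sum_of_subset_of_nonneg (Finset.subset_univ _)
              fun i _ _ => ?_
            have := (hQpos i).le
            positivity
    have hAx := hAρ x
    rw [hx1] at hAx
    rw [hTquad]
    linarith
  -- assemble
  haveI hne : Nonempty {W : Submodule ℂ 𝓗 // finrank ℂ W = (j:ℕ) + 1} := ⟨⟨W₀, hW₀⟩⟩
  have hlow : -(Qv j) ≤ minMax T ((j:ℕ) + 1) := by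
    refine le_ciInf fun W => ?_
    obtain ⟨x, hxW, hx1, hxb⟩ := key_lb W.1 W.2
    exact hxb.trans (le_ciSup (hbdd W) ⟨x, hxW, hx1⟩)
  have hupp : minMax T ((j:ℕ) + 1) ≤ ρ - Qv j := by
    refine (ciInf_le ⟨-(Qv j), ?_⟩ (⟨W₀, hW₀⟩ :
        {W : Submodule ℂ 𝓗 // finrank ℂ W = (j:ℕ) + 1})).trans ?_
    · rintro r ⟨W, rfl⟩
      obtain ⟨x, hxW, hx1, hxb⟩ := key_lb W.1 W.2
      exact hxb.trans (le_ciSup (hbdd W) ⟨x, hxW, hx1⟩)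
    · haveI : Nonempty {x : 𝓗 // x ∈ W₀ ∧ ‖x‖ = 1} :=
        ⟨⟨f 0, Submodule.subset_span ⟨0, rfl⟩, hfon.1 0⟩⟩
      exact ciSup_le fun x => hub x x.2.1 x.2.2
  exact ⟨⟨hlow, hupp⟩, fun h => lt_of_le_of_lt hupp (by linarith)⟩
end

section
/- Let V be a countable type, let β₊ ≥ 0 be real, let d : V → ℝ satisfy 0 ≤ d(v) ≤ β₊ for all v, and let t : V → V → ℂ be a Hermitian kernel, t(v,u) = conj(t(u,v)), such that for every v the family (|t(v,u)|)_{u ∈ V} is summable with ∑_u |t(v,u)| ≤ d(v). Let A : ℓ²(V) →L[ℂ] ℓ²(V) be a bounded operator satisfying (A f)(v) = d(v)·f(v) − ∑'_{u} t(v,u)·f(u) for all f ∈ ℓ²(V) and v ∈ V. Then 0 ≤ Re⟨f, A f⟩ ≤ 2·β₊·‖f‖² for every f ∈ ℓ²(V). -/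
/-!
Write `⟪f, A f⟫ = D - X` with `D = ∑ v, d v ‖f v‖²` and `X = ∑ v, conj (f v) ∑ u, t v u f u`.
The Schur test bounds the off-diagonal part: `‖f v‖ ‖f u‖ ≤ (‖f v‖² + ‖f u‖²) / 2` together with
the symmetry `‖t v u‖ = ‖t u v‖` gives `‖X‖ ≤ ∑ v, (∑ u, ‖t v u‖) ‖f v‖² ≤ D`. Hence
`re ⟪f, A f⟫ ∈ [0, 2 D] ⊆ [0, 2 β₊ ‖f‖²]`.
-/

open ComplexConjugate RCLike

namespace lp

variable {α : Type*} {E : α → Type*} [∀ i, NormedAddCommGroup (E i)]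

theorem summable_norm_sq (f : lp E 2) : Summable fun i => ‖f i‖ ^ 2 := by
  have h := (lp.memℓp f).summable (by norm_num : (0 : ℝ) < (2 : ENNReal).toReal)
  norm_num at h
  exact_mod_cast h

theorem norm_sq_eq_tsum_norm_sq (f : lp E 2) : ‖f‖ ^ 2 = ∑' i, ‖f i‖ ^ 2 := by
  have h := lp.norm_rpow_eq_tsum (by norm_num : (0 : ℝ) < (2 : ENNReal).toReal) f
  norm_num at h
  exact_mod_cast h

end lp

section SchurTest

variable {V : Type*} {K : V → V → ℝ} {x : V → ℝ}

theorem summable_kernel_mul_sq (hK0 : ∀ v u, 0 ≤ K v u) (hKrow : ∀ v, Summable (K v))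
    (hx : Summable fun v => (∑' u, K v u) * x v ^ 2) :
    Summable fun p : V × V => K p.1 p.2 * x p.1 ^ 2 := by
  have hnonneg : 0 ≤ fun p : V × V => K p.1 p.2 * x p.1 ^ 2 :=
    fun p => mul_nonneg (hK0 _ _) (sq_nonneg _)
  rw [summable_prod_of_nonneg hnonneg]
  exact ⟨fun v => (hKrow v).mul_right (x v ^ 2), by simpa only [tsum_mul_right] using hx⟩

theorem tsum_kernel_mul_sq (hK0 : ∀ v u, 0 ≤ K v u) (hKrow : ∀ v, Summable (K v))
    (hx : Summable fun v => (∑' u, K v u) * x v ^ 2) :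
    ∑' p : V × V, K p.1 p.2 * x p.1 ^ 2 = ∑' v, (∑' u, K v u) * x v ^ 2 := by
  rw [(summable_kernel_mul_sq hK0 hKrow hx).tsum_prod' fun v => (hKrow v).mul_right (x v ^ 2)]
  simp only [tsum_mul_right]

theorem tsum_kernel_mul_mul_le (hK0 : ∀ v u, 0 ≤ K v u) (hKsymm : ∀ v u, K v u = K u v)
    (hKrow : ∀ v, Summable (K v)) (hx0 : ∀ v, 0 ≤ x v)
    (hx : Summable fun v => (∑' u, K v u) * x v ^ 2) :
    Summable (fun p : V × V => K p.1 p.2 * (x p.1 * x p.2)) ∧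
      ∑' p : V × V, K p.1 p.2 * (x p.1 * x p.2) ≤ ∑' v, (∑' u, K v u) * x v ^ 2 := by
  have hswap : (fun p : V × V => K p.1 p.2 * x p.2 ^ 2) =
      fun p => K p.2 p.1 * x p.2 ^ 2 := by
    ext p; rw [hKsymm]
  have hswap_tsum : ∑' p : V × V, K p.2 p.1 * x p.2 ^ 2 = ∑' p : V × V, K p.1 p.2 * x p.1 ^ 2 :=
    (Equiv.prodComm V V).tsum_eq fun p => K p.1 p.2 * x p.1 ^ 2
  have hfst := summable_kernel_mul_sq hK0 hKrow hx
  have hsnd : Summable fun p : V × V => K p.1 p.2 * x p.2 ^ 2 := by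
    rw [hswap]; exact (Equiv.prodComm V V).summable_iff.2 hfst
  have hamgm : ∀ p : V × V,
      K p.1 p.2 * (x p.1 * x p.2) ≤ (K p.1 p.2 * x p.1 ^ 2 + K p.1 p.2 * x p.2 ^ 2) / 2 := by
    intro p
    nlinarith [mul_nonneg (hK0 p.1 p.2) (sq_nonneg (x p.1 - x p.2))]
  have hbound := (hfst.add hsnd).div_const 2
  have hsum : Summable fun p : V × V => K p.1 p.2 * (x p.1 * x p.2) :=
    hbound.of_nonneg_of_le (fun p => mul_nonneg (hK0 _ _) (mul_nonneg (hx0 _) (hx0 _))) hamgm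
  refine ⟨hsum, ?_⟩
  calc ∑' p : V × V, K p.1 p.2 * (x p.1 * x p.2)
      ≤ ∑' p : V × V, (K p.1 p.2 * x p.1 ^ 2 + K p.1 p.2 * x p.2 ^ 2) / 2 :=
        hsum.tsum_le_tsum hamgm hbound
    _ = ∑' v, (∑' u, K v u) * x v ^ 2 := by
        rw [tsum_div_const, hfst.tsum_add hsnd, hswap, hswap_tsum,
          tsum_kernel_mul_sq hK0 hKrow hx]
        ring

end SchurTest

section Kernel

variable {𝕜 : Type*} [RCLike 𝕜] {V : Type*} {t : V → V → 𝕜}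

theorem summable_norm_kernel_mul_lp {v : V} (hrow : Summable fun u => ‖t v u‖)
    (f : lp (fun _ : V => 𝕜) 2) : Summable fun u => ‖t v u * f u‖ := by
  refine (hrow.mul_right ‖f‖).of_nonneg_of_le (fun u => norm_nonneg _) fun u => ?_
  rw [norm_mul]
  exact mul_le_mul_of_nonneg_left (lp.norm_apply_le_norm two_ne_zero f u) (norm_nonneg _)

theorem norm_conj_mul_tsum_kernel_le {v : V} (hrow : Summable fun u => ‖t v u‖)
    (f : lp (fun _ : V => 𝕜) 2) :
    ‖conj (f v) * ∑' u, t v u * f u‖ ≤ ∑' u, ‖t v u‖ * (‖f v‖ * ‖f u‖) :=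
  calc ‖conj (f v) * ∑' u, t v u * f u‖ ≤ ‖f v‖ * ∑' u, ‖t v u * f u‖ := by
        rw [norm_mul, RCLike.norm_conj]
        exact mul_le_mul_of_nonneg_left
          (norm_tsum_le_tsum_norm (summable_norm_kernel_mul_lp hrow f)) (norm_nonneg _)
    _ = ∑' u, ‖t v u‖ * (‖f v‖ * ‖f u‖) := by
        rw [← tsum_mul_left]
        exact tsum_congr fun u => by rw [norm_mul]; ring

theorem summable_norm_conj_mul_tsum_kernel (hsymm : ∀ v u, ‖t v u‖ = ‖t u v‖)
    (hrow : ∀ v, Summable fun u => ‖t v u‖) {f : lp (fun _ : V => 𝕜) 2}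
    (hf : Summable fun v => (∑' u, ‖t v u‖) * ‖f v‖ ^ 2) :
    Summable fun v => ‖conj (f v) * ∑' u, t v u * f u‖ := by
  have hschur := (tsum_kernel_mul_mul_le (fun v u => norm_nonneg (t v u)) hsymm hrow
    (fun v => norm_nonneg (f v)) hf).1
  have hrows := ((summable_prod_of_nonneg fun p => by positivity).1 hschur).2
  exact hrows.of_nonneg_of_le (fun v => norm_nonneg _)
    fun v => norm_conj_mul_tsum_kernel_le (hrow v) f

theorem norm_tsum_conj_mul_tsum_kernel_le (hsymm : ∀ v u, ‖t v u‖ = ‖t u v‖)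
    (hrow : ∀ v, Summable fun u => ‖t v u‖) {f : lp (fun _ : V => 𝕜) 2}
    (hf : Summable fun v => (∑' u, ‖t v u‖) * ‖f v‖ ^ 2) :
    ‖∑' v, conj (f v) * ∑' u, t v u * f u‖ ≤ ∑' v, (∑' u, ‖t v u‖) * ‖f v‖ ^ 2 := by
  obtain ⟨hschur, hle⟩ := tsum_kernel_mul_mul_le (fun v u => norm_nonneg (t v u)) hsymm hrow
    (fun v => norm_nonneg (f v)) hf
  have hrows := (summable_prod_of_nonneg fun p => by positivity).1 hschur
  calc ‖∑' v, conj (f v) * ∑' u, t v u * f u‖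
      ≤ ∑' v, ‖conj (f v) * ∑' u, t v u * f u‖ :=
        norm_tsum_le_tsum_norm (summable_norm_conj_mul_tsum_kernel hsymm hrow hf)
    _ ≤ ∑' v, ∑' u, ‖t v u‖ * (‖f v‖ * ‖f u‖) :=
        (summable_norm_conj_mul_tsum_kernel hsymm hrow hf).tsum_le_tsum
          (fun v => norm_conj_mul_tsum_kernel_le (hrow v) f) hrows.2
    _ = ∑' p : V × V, ‖t p.1 p.2‖ * (‖f p.1‖ * ‖f p.2‖) := (hschur.tsum_prod' hrows.1).symm
    _ ≤ _ := hle

end Kernel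

theorem lp.re_inner_eq_tsum_sub {𝕜 : Type*} [RCLike 𝕜] {V : Type*} {f g : lp (fun _ : V => 𝕜) 2}
    {d : V → ℝ} {c : V → 𝕜} (hg : ∀ v, g v = d v * f v - c v)
    (hd : Summable fun v => d v * ‖f v‖ ^ 2) (hc : Summable fun v => conj (f v) * c v) :
    re (inner 𝕜 f g) = ∑' v, d v * ‖f v‖ ^ 2 - re (∑' v, conj (f v) * c v) := by
  have hterm : ∀ v, inner 𝕜 (f v) (g v) = ((d v * ‖f v‖ ^ 2 : ℝ) : 𝕜) - conj (f v) * c v := by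
    intro v
    rw [RCLike.inner_apply, hg, RCLike.ofReal_mul, RCLike.ofReal_pow, ← RCLike.conj_mul]
    ring
  have hd' : Summable fun v => ((d v * ‖f v‖ ^ 2 : ℝ) : 𝕜) := (RCLike.summable_ofReal 𝕜).2 hd
  rw [lp.inner_eq_tsum, tsum_congr hterm, hd'.tsum_sub hc, map_sub, ← RCLike.ofReal_tsum,
    RCLike.ofReal_re]

theorem bridge_laplacian_form_bounds_general {V : Type*}
    (betaPlus : ℝ)
    (d : V → ℝ) (hd : ∀ v, 0 ≤ d v ∧ d v ≤ betaPlus)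
    (t : V → V → ℂ) (ht : ∀ v u, t v u = starRingEnd ℂ (t u v))
    (hsum : ∀ v, Summable (fun u => ‖t v u‖))
    (hdom : ∀ v, ∑' u, ‖t v u‖ ≤ d v)
    (A : lp (fun _ : V => ℂ) 2 →L[ℂ] lp (fun _ : V => ℂ) 2)
    (hA : ∀ (f : lp (fun _ : V => ℂ) 2) (v : V),
      A f v = (d v : ℂ) * f v - ∑' u, t v u * f u) :
    ∀ f : lp (fun _ : V => ℂ) 2,
      0 ≤ (inner (𝕜 := ℂ) f (A f)).re ∧
        (inner (𝕜 := ℂ) f (A f)).re ≤ 2 * betaPlus * ‖f‖ ^ 2 := by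
  intro f
  have hsymm : ∀ v u, ‖t v u‖ = ‖t u v‖ := fun v u => by rw [ht, Complex.norm_conj]
  have hdiag_le : ∀ v, d v * ‖f v‖ ^ 2 ≤ betaPlus * ‖f v‖ ^ 2 := fun v =>
    mul_le_mul_of_nonneg_right (hd v).2 (sq_nonneg _)
  have hrow_le : ∀ v, (∑' u, ‖t v u‖) * ‖f v‖ ^ 2 ≤ d v * ‖f v‖ ^ 2 := fun v =>
    mul_le_mul_of_nonneg_right (hdom v) (sq_nonneg _)
  have hdiag : Summable fun v => d v * ‖f v‖ ^ 2 :=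
    ((lp.summable_norm_sq f).mul_left betaPlus).of_nonneg_of_le
      (fun v => mul_nonneg (hd v).1 (sq_nonneg _)) hdiag_le
  have hrow : Summable fun v => (∑' u, ‖t v u‖) * ‖f v‖ ^ 2 :=
    hdiag.of_nonneg_of_le (fun v => mul_nonneg (tsum_nonneg fun u => norm_nonneg _)
      (sq_nonneg _)) hrow_le
  have hoff : ‖∑' v, conj (f v) * ∑' u, t v u * f u‖ ≤ ∑' v, d v * ‖f v‖ ^ 2 :=
    (norm_tsum_conj_mul_tsum_kernel_le hsymm hsum hrow).trans
      (hrow.tsum_le_tsum hrow_le hdiag)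
  have hdiag_tsum_le : ∑' v, d v * ‖f v‖ ^ 2 ≤ betaPlus * ‖f‖ ^ 2 := by
    rw [lp.norm_sq_eq_tsum_norm_sq, ← tsum_mul_left]
    exact hdiag.tsum_le_tsum hdiag_le ((lp.summable_norm_sq f).mul_left betaPlus)
  have hform := lp.re_inner_eq_tsum_sub (hA f) hdiag
    (summable_norm_conj_mul_tsum_kernel hsymm hsum hrow).of_norm
  have hre := RCLike.abs_re_le_norm (∑' v, conj (f v) * ∑' u, t v u * f u)
  simp only [RCLike.re_to_complex] at hform hre
  rw [hform]
  constructor <;> linarith [abs_le.1 (hre.trans hoff)]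

/-- Key lemma behind Theorem 2.2: a Hermitian "Laplacian-like" operator whose diagonal is
`d v ∈ [0, β₊]` and whose off-diagonal kernel is row-wise dominated by `d v` has quadratic
form contained in `[0, 2β₊]`. -/
theorem bridge_laplacian_form_bounds {V : Type*} [Countable V]
    (betaPlus : ℝ) (hbeta : 0 ≤ betaPlus)
    (d : V → ℝ) (hd : ∀ v, 0 ≤ d v ∧ d v ≤ betaPlus)
    (t : V → V → ℂ) (ht : ∀ v u, t v u = starRingEnd ℂ (t u v))
    (hsum : ∀ v, Summable (fun u => ‖t v u‖))
    (hdom : ∀ v, ∑' u, ‖t v u‖ ≤ d v)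
    (A : lp (fun _ : V => ℂ) 2 →L[ℂ] lp (fun _ : V => ℂ) 2)
    (hA : ∀ (f : lp (fun _ : V => ℂ) 2) (v : V),
      A f v = (d v : ℂ) * f v - ∑' u, t v u * f u) :
    ∀ f : lp (fun _ : V => ℂ) 2,
      0 ≤ (inner (𝕜 := ℂ) f (A f)).re ∧
        (inner (𝕜 := ℂ) f (A f)).re ≤ 2 * betaPlus * ‖f‖ ^ 2 :=
  bridge_laplacian_form_bounds_general betaPlus d hd t ht hsum hdom A hA
end

section
/- For every C > 0 there exists a nonnegative finitely supported q : ℤ → ℝ such that the guided Schrödinger operator H on ℓ²(ℤ²) associated with q satisfies: the Lebesgue measure of the negative part of its real spectrum exceeds C, i.e., MeasureTheory.volume ({x : ℝ | (x : ℂ) ∈ spectrum ℂ H} ∩ Set.Iio 0) > C. -/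
/-!
If `ψ ∈ ℓ²(ℤ)` solves `2ψ(n) - ψ(n+1) - ψ(n-1) - q(n)ψ(n) = Eψ(n)`, then `E + 2 - 2 cos θ` lies in
the spectrum of `H` for every `θ`: the functions `e^{iθa} 1_{[0,N)}(a) ψ(b)` have norm `√N ‖ψ‖`,
while `(E + 2 - 2 cos θ - H)` applied to them only sees the four columns at the ends of `[0, N)`.
So every eigenvalue `E` of the one-dimensional operator contributes the band `[E, E + 4]`.

To get many eigenvalues, put `k` single-site wells of strengths `W_j - W_j⁻¹` (`W_j = 8 + 2j`) far
apart. For `E = 2 - w - w⁻¹` with `w > 1`, the solution equal to `w ^ n` on the left is, between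
wells, a combination `A w ^ n + B w ^ (-n)`. With the wells far apart `B` stays negligible against
`A`, and crossing the `j`-th well multiplies the sign of `A` by the sign of `w - W_j`. Hence `A`
changes sign on `[W_j - 1/2, W_j + 1/2]` and vanishes somewhere there, and the solution is then
in `ℓ²`. These eigenvalues are less than `4` apart, so the bands overlap and cover an interval of
length `2k` in `(-∞, 0)`.
-/

open scoped lp

noncomputable section

namespace GuidedSpectrum

theorem mem_spectrum_of_forall_exists_mul_norm_lt {𝕜 E : Type*} [NontriviallyNormedField 𝕜]
    [NormedAddCommGroup E] [NormedSpace 𝕜 E] {A : E →L[𝕜] E} {a : 𝕜}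
    (h : ∀ C : ℝ, ∃ u : E, C * ‖(algebraMap 𝕜 (E →L[𝕜] E) a - A) u‖ < ‖u‖) :
    a ∈ spectrum 𝕜 A := by
  rintro ⟨U, hU⟩
  obtain ⟨u, hu⟩ := h ‖(↑U⁻¹ : E →L[𝕜] E)‖
  have hinv : (↑U⁻¹ : E →L[𝕜] E) ((algebraMap 𝕜 (E →L[𝕜] E) a - A) u) = u := by
    rw [← hU, ← mul_apply_eq_comp, Units.inv_mul, one_apply_eq_self]
  have := (↑U⁻¹ : E →L[𝕜] E).le_opNorm ((algebraMap 𝕜 (E →L[𝕜] E) a - A) u)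
  rw [hinv] at this
  exact hu.not_ge this

section L2

variable {α β E : Type*} [NormedAddCommGroup E]

theorem memℓp_two_iff {f : α → E} : Memℓp f 2 ↔ Summable fun i => ‖f i‖ ^ 2 := by
  rw [memℓp_gen_iff (by norm_num), ENNReal.toReal_ofNat]
  simp only [Real.rpow_two]

theorem lp.norm_sq_eq_tsum (f : ℓ²(α, E)) : ‖f‖ ^ 2 = ∑' i, ‖f i‖ ^ 2 := by
  have := lp.norm_rpow_eq_tsum (p := 2) (by norm_num) f
  simpa only [ENNReal.toReal_ofNat, Real.rpow_two] using this

theorem summable_and_tsum_norm_sq_le {f : α → E} (s : Finset α) (hs : ∀ a ∉ s, f a = 0) {M : ℝ}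
    (hM : ∀ a, ‖f a‖ ^ 2 ≤ M) :
    Summable (fun a => ‖f a‖ ^ 2) ∧ ∑' a, ‖f a‖ ^ 2 ≤ s.card * M := by
  have hs' : ∀ a ∉ s, ‖f a‖ ^ 2 = 0 := fun a ha => by simp [hs a ha]
  refine ⟨summable_of_ne_finset_zero hs', ?_⟩
  rw [tsum_eq_sum hs', ← nsmul_eq_mul]
  exact Finset.sum_le_card_nsmul _ _ _ fun a _ => hM a

theorem summable_and_tsum_norm_mul_sq {R : Type*} [NormedRing R] [NormMulClass R] {f : α → R}
    {g : β → R} (hf : Summable fun a => ‖f a‖ ^ 2) (hg : Summable fun b => ‖g b‖ ^ 2) :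
    Summable (fun m : α × β => ‖f m.1 * g m.2‖ ^ 2) ∧
      ∑' m : α × β, ‖f m.1 * g m.2‖ ^ 2 = (∑' a, ‖f a‖ ^ 2) * ∑' b, ‖g b‖ ^ 2 := by
  simp only [norm_mul, mul_pow]
  have hf' : Summable fun a => ‖‖f a‖ ^ 2‖ := by simpa using hf
  have hg' : Summable fun b => ‖‖g b‖ ^ 2‖ := by simpa using hg
  have hsum := summable_mul_of_summable_norm (R := ℝ) hf' hg'
  have htsum := tsum_mul_tsum_of_summable_norm (R := ℝ) hf' hg'
  exact ⟨hsum, htsum.symm⟩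

end L2

def IsGuidedSchrodinger (q : ℤ → ℝ) (H : ℓ²(ℤ × ℤ, ℂ) →L[ℂ] ℓ²(ℤ × ℤ, ℂ)) : Prop :=
  ∀ (f : ℓ²(ℤ × ℤ, ℂ)) (m₁ m₂ : ℤ),
    H f (m₁, m₂) = 4 * f (m₁, m₂) - f (m₁ + 1, m₂) - f (m₁ - 1, m₂)
      - f (m₁, m₂ + 1) - f (m₁, m₂ - 1) - (q m₂ : ℂ) * f (m₁, m₂)

structure IsL2Eigenfunction (q : ℤ → ℝ) (E : ℝ) (ψ : ℤ → ℝ) : Prop where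
  ne_zero : ψ ≠ 0
  summable_sq : Summable fun n => ψ n ^ 2
  apply_eq : ∀ n, 2 * ψ n - ψ (n + 1) - ψ (n - 1) - q n * ψ n = E * ψ n

def truncatedWave (θ : ℝ) (N : ℕ) (a : ℤ) : ℂ :=
  if a ∈ Finset.Ico 0 (N : ℤ) then Complex.exp (θ * a * Complex.I) else 0

theorem exp_add_one_add_exp_sub_one (θ : ℝ) (a : ℤ) :
    Complex.exp (θ * ↑(a + 1) * Complex.I) + Complex.exp (θ * ↑(a - 1) * Complex.I)
      = 2 * Real.cos θ * Complex.exp (θ * a * Complex.I) := by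
  simp only [Complex.ofReal_cos, Complex.two_cos, add_mul, ← Complex.exp_add]
  push_cast
  ring_nf

theorem truncatedWave_norm_sq (θ : ℝ) (N : ℕ) :
    Summable (fun a => ‖truncatedWave θ N a‖ ^ 2) ∧ ∑' a, ‖truncatedWave θ N a‖ ^ 2 = N := by
  have hs : ∀ a ∉ Finset.Ico 0 (N : ℤ), ‖truncatedWave θ N a‖ ^ 2 = 0 := fun a ha => by
    simp [truncatedWave, ha]
  refine ⟨summable_of_ne_finset_zero hs, ?_⟩
  rw [tsum_eq_sum hs, Finset.sum_congr rfl fun a ha => by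
    rw [truncatedWave, if_pos ha, ← Complex.ofReal_intCast, ← Complex.ofReal_mul,
      Complex.norm_exp_ofReal_mul_I, one_pow]]
  simp

theorem truncatedWave_defect (θ : ℝ) (N : ℕ) :
    Summable (fun a => ‖truncatedWave θ N (a + 1) + truncatedWave θ N (a - 1)
        - 2 * Real.cos θ * truncatedWave θ N a‖ ^ 2) ∧
      ∑' a, ‖truncatedWave θ N (a + 1) + truncatedWave θ N (a - 1)
        - 2 * Real.cos θ * truncatedWave θ N a‖ ^ 2 ≤ 16 := by
  set χ : ℤ → ℂ := fun a => if a ∈ Finset.Ico 0 (N : ℤ) then 1 else 0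
  set e : ℤ → ℂ := fun a => Complex.exp (θ * a * Complex.I)
  have he1 : ∀ a, ‖e a‖ = 1 := fun a => by
    simp only [e, ← Complex.ofReal_intCast, ← Complex.ofReal_mul, Complex.norm_exp_ofReal_mul_I]
  -- only the jumps of the cut-off `χ` survive, since `e` solves the free equation
  have hsplit : ∀ a, truncatedWave θ N (a + 1) + truncatedWave θ N (a - 1)
      - 2 * Real.cos θ * truncatedWave θ N a
        = e (a + 1) * (χ (a + 1) - χ a) + e (a - 1) * (χ (a - 1) - χ a) := fun a => by
    have hg : ∀ b, truncatedWave θ N b = e b * χ b := fun b => by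
      simp only [truncatedWave, e, χ, mul_ite, mul_one, mul_zero]
    rw [hg, hg, hg]
    linear_combination χ a * exp_add_one_add_exp_sub_one θ a
  set S : Finset ℤ := {-1, 0, (N : ℤ) - 1, (N : ℤ)}
  have hsupp : ∀ a ∉ S, χ (a + 1) = χ a ∧ χ (a - 1) = χ a := by
    intro a ha
    simp only [S, Finset.mem_insert, Finset.mem_singleton, not_or] at ha
    simp only [χ, Finset.mem_Ico]
    constructor <;> split_ifs <;> first | rfl | omega
  have hχ : ∀ a b, ‖χ a - χ b‖ ≤ 1 := fun a b => by simp only [χ]; split_ifs <;> simp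
  have hbound : ∀ a, ‖e (a + 1) * (χ (a + 1) - χ a) + e (a - 1) * (χ (a - 1) - χ a)‖ ^ 2 ≤ 4 := by
    intro a
    have h := norm_add_le (e (a + 1) * (χ (a + 1) - χ a)) (e (a - 1) * (χ (a - 1) - χ a))
    rw [norm_mul, norm_mul, he1, he1, one_mul, one_mul] at h
    nlinarith [hχ (a + 1) a, hχ (a - 1) a, norm_nonneg (e (a + 1) * (χ (a + 1) - χ a)
      + e (a - 1) * (χ (a - 1) - χ a))]
  obtain ⟨hsum, hle⟩ := summable_and_tsum_norm_sq_le S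
    (f := fun a => e (a + 1) * (χ (a + 1) - χ a) + e (a - 1) * (χ (a - 1) - χ a))
    (fun a ha => by simp [hsupp a ha]) hbound
  have hcard : (S.card : ℝ) ≤ 4 := by exact_mod_cast Finset.card_le_four
  simp only [hsplit]
  exact ⟨hsum, by linarith⟩

theorem algebraMap_sub_apply_of_eq_mul {q : ℤ → ℝ} {H : ℓ²(ℤ × ℤ, ℂ) →L[ℂ] ℓ²(ℤ × ℤ, ℂ)}
    (hH : IsGuidedSchrodinger q H) {E : ℝ} {ψ : ℤ → ℝ}
    (hψ : ∀ n, 2 * ψ n - ψ (n + 1) - ψ (n - 1) - q n * ψ n = E * ψ n) {g : ℤ → ℂ}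
    {u : ℓ²(ℤ × ℤ, ℂ)} (hu : ∀ a b, u (a, b) = g a * ψ b) (θ : ℝ) (a b : ℤ) :
    (algebraMap ℂ _ ((E + 2 - 2 * Real.cos θ : ℝ) : ℂ) - H) u (a, b)
      = (g (a + 1) + g (a - 1) - 2 * Real.cos θ * g a) * ψ b := by
  have heq : ((ψ (b + 1) + ψ (b - 1) + q b * ψ b : ℝ) : ℂ) = (((2 - E) * ψ b : ℝ) : ℂ) := by
    congr 1
    linarith [hψ b]
  push_cast at heq
  rw [sub_apply, lp.coeFn_sub, Pi.sub_apply, Algebra.algebraMap_eq_smul_one, smul_apply,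
    one_apply_eq_self, lp.coeFn_smul, Pi.smul_apply, smul_eq_mul, hH]
  simp only [hu]
  push_cast
  linear_combination g a * heq

theorem ofReal_mem_spectrum_of_isL2Eigenfunction {q : ℤ → ℝ}
    {H : ℓ²(ℤ × ℤ, ℂ) →L[ℂ] ℓ²(ℤ × ℤ, ℂ)} (hH : IsGuidedSchrodinger q H) {E : ℝ} {ψ : ℤ → ℝ}
    (hψ : IsL2Eigenfunction q E ψ) (θ : ℝ) :
    ((E + 2 - 2 * Real.cos θ : ℝ) : ℂ) ∈ spectrum ℂ H := by
  set T := algebraMap ℂ (ℓ²(ℤ × ℤ, ℂ) →L[ℂ] ℓ²(ℤ × ℤ, ℂ)) ((E + 2 - 2 * Real.cos θ : ℝ) : ℂ) - H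
  apply mem_spectrum_of_forall_exists_mul_norm_lt
  intro C
  obtain ⟨N, hN⟩ := exists_nat_gt (16 * C ^ 2)
  set g := truncatedWave θ N
  set φ : ℤ → ℂ := fun n => ψ n
  have hφ : Summable fun n => ‖φ n‖ ^ 2 := by simpa [φ] using hψ.summable_sq
  have hφpos : 0 < ∑' n, ‖φ n‖ ^ 2 := by
    obtain ⟨n, hn⟩ := Function.ne_iff.mp hψ.ne_zero
    exact hφ.tsum_pos (fun _ => by positivity) n (by simpa [φ] using sq_pos_of_ne_zero hn)
  obtain ⟨hg, hgN⟩ := truncatedWave_norm_sq θ N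
  obtain ⟨hc, hc16⟩ := truncatedWave_defect θ N
  obtain ⟨hu, hunorm⟩ := summable_and_tsum_norm_mul_sq hg hφ
  obtain ⟨-, hvnorm⟩ := summable_and_tsum_norm_mul_sq hc hφ
  set u : ℓ²(ℤ × ℤ, ℂ) := ⟨fun m => g m.1 * φ m.2, memℓp_two_iff.2 hu⟩
  have hTu : ∀ m, T u m = (g (m.1 + 1) + g (m.1 - 1) - 2 * Real.cos θ * g m.1) * φ m.2 :=
    fun m => algebraMap_sub_apply_of_eq_mul hH hψ.apply_eq (fun _ _ => rfl) θ m.1 m.2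
  have hnorm_u : ‖u‖ ^ 2 = N * ∑' n, ‖φ n‖ ^ 2 := by
    rw [lp.norm_sq_eq_tsum, ← hgN, ← hunorm]
  have hnorm_Tu : ‖T u‖ ^ 2 ≤ 16 * ∑' n, ‖φ n‖ ^ 2 := by
    rw [lp.norm_sq_eq_tsum, tsum_congr fun m => by rw [hTu m], hvnorm]
    exact mul_le_mul_of_nonneg_right hc16 hφpos.le
  refine ⟨u, (le_abs_self _).trans_lt (abs_lt_of_sq_lt_sq ?_ (norm_nonneg u))⟩
  rw [mul_pow, hnorm_u]
  calc C ^ 2 * ‖T u‖ ^ 2 ≤ C ^ 2 * (16 * ∑' n, ‖φ n‖ ^ 2) := by gcongr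
    _ < N * ∑' n, ‖φ n‖ ^ 2 := by nlinarith

theorem Icc_subset_spectrum_of_isL2Eigenfunction {q : ℤ → ℝ}
    {H : ℓ²(ℤ × ℤ, ℂ) →L[ℂ] ℓ²(ℤ × ℤ, ℂ)} (hH : IsGuidedSchrodinger q H) {E : ℝ} {ψ : ℤ → ℝ}
    (hψ : IsL2Eigenfunction q E ψ) :
    Set.Icc E (E + 4) ⊆ {x : ℝ | (x : ℂ) ∈ spectrum ℂ H} := by
  intro x hx
  have hcos : Real.cos (Real.arccos ((E + 2 - x) / 2)) = (E + 2 - x) / 2 :=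
    Real.cos_arccos (by linarith [hx.2]) (by linarith [hx.1])
  have := ofReal_mem_spectrum_of_isL2Eigenfunction hH hψ (Real.arccos ((E + 2 - x) / 2))
  rwa [hcos, show E + 2 - 2 * ((E + 2 - x) / 2) = x by ring] at this

def jostSeq (q : ℤ → ℝ) (w : ℝ) : ℕ → ℝ
  | 0 => 1
  | 1 => w
  | n + 2 => (w + w⁻¹ - q (n + 1)) * jostSeq q w (n + 1) - jostSeq q w n

def jost (q : ℤ → ℝ) (w : ℝ) (n : ℤ) : ℝ := if n < 0 then w ^ n else jostSeq q w n.toNat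

/- The components of `(jostSeq q w n, jostSeq q w (n + 1))` along the free solutions `w ^ n` and
`w ^ (-n)`; at a site where `q` vanishes they get multiplied by `w` and `w⁻¹`. -/
def growCoeff (q : ℤ → ℝ) (w : ℝ) (n : ℕ) : ℝ := jostSeq q w (n + 1) - w⁻¹ * jostSeq q w n

def decayCoeff (q : ℤ → ℝ) (w : ℝ) (n : ℕ) : ℝ := w * jostSeq q w n - jostSeq q w (n + 1)

section Jost

variable {q : ℤ → ℝ} {w : ℝ}

theorem jost_of_nonpos {n : ℤ} (hn : n ≤ 0) : jost q w n = w ^ n := by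
  rcases hn.lt_or_eq with hn | rfl
  · simp [jost, hn]
  · simp [jost, jostSeq]

theorem jost_natCast (n : ℕ) : jost q w n = jostSeq q w n := by simp [jost]

theorem jost_apply_eq (hw : w ≠ 0) (hq : ∀ n ≤ 0, q n = 0) (n : ℤ) :
    2 * jost q w n - jost q w (n + 1) - jost q w (n - 1) - q n * jost q w n
      = (2 - w - w⁻¹) * jost q w n := by
  rcases lt_trichotomy n 0 with hn | rfl | hn
  · rw [jost_of_nonpos hn.le, jost_of_nonpos (by omega), jost_of_nonpos (by omega), hq n hn.le,
      zpow_add_one₀ hw, zpow_sub_one₀ hw]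
    ring
  · have h1 : jost q w 1 = w := by simp [jost, jostSeq]
    simp only [zero_add, zero_sub, h1, jost_of_nonpos le_rfl,
      jost_of_nonpos (show (-1 : ℤ) ≤ 0 by norm_num), hq 0 le_rfl, zpow_zero, zpow_neg_one]
    ring
  · obtain ⟨m, rfl⟩ : ∃ m : ℕ, n = m + 1 := ⟨n.toNat - 1, by omega⟩
    rw [show (m + 1 + 1 : ℤ) = (m + 2 : ℕ) by push_cast; ring, add_sub_cancel_right,
      show (m + 1 : ℤ) = (m + 1 : ℕ) by push_cast; ring, jost_natCast, jost_natCast, jost_natCast,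
      jostSeq]
    push_cast
    ring

theorem growCoeff_succ (hw : w ≠ 0) (n : ℕ) :
    growCoeff q w (n + 1) = w * growCoeff q w n - q (n + 1) * jostSeq q w (n + 1) := by
  simp only [growCoeff, jostSeq]
  field_simp
  ring

theorem decayCoeff_succ (hw : w ≠ 0) (n : ℕ) :
    decayCoeff q w (n + 1) = w⁻¹ * decayCoeff q w n + q (n + 1) * jostSeq q w (n + 1) := by
  simp only [decayCoeff, jostSeq]
  field_simp
  ring

theorem sub_inv_mul_coeff_succ (hw : w ≠ 0) (n : ℕ) :
    (w - w⁻¹) * growCoeff q w (n + 1)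
        = w * (w - w⁻¹ - q (n + 1)) * growCoeff q w n - q (n + 1) * w⁻¹ * decayCoeff q w n ∧
      (w - w⁻¹) * decayCoeff q w (n + 1)
        = q (n + 1) * w * growCoeff q w n + w⁻¹ * (w - w⁻¹ + q (n + 1)) * decayCoeff q w n := by
  have hψ : (w - w⁻¹) * jostSeq q w (n + 1) = w * growCoeff q w n + w⁻¹ * decayCoeff q w n := by
    simp only [growCoeff, decayCoeff]
    ring
  rw [growCoeff_succ hw, decayCoeff_succ hw]
  constructor
  · linear_combination -q (n + 1) * hψ
  · linear_combination q (n + 1) * hψ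

theorem coeff_add_of_forall_eq_zero (hw : w ≠ 0) {n t : ℕ}
    (hq : ∀ m : ℕ, n < m → m ≤ n + t → q m = 0) :
    growCoeff q w (n + t) = w ^ t * growCoeff q w n ∧
      decayCoeff q w (n + t) = w⁻¹ ^ t * decayCoeff q w n := by
  induction t with
  | zero => simp
  | succ t ih =>
    obtain ⟨ihA, ihB⟩ := ih fun m h1 h2 => hq m h1 (by omega)
    have hq' : q (↑(n + t) + 1) = 0 := by exact_mod_cast hq (n + t + 1) (by omega) le_rfl
    rw [← add_assoc, growCoeff_succ hw, decayCoeff_succ hw, hq', ihA, ihB]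
    constructor <;> ring

theorem summable_jost_sq (hw : 1 < w) {N : ℕ} (hq : ∀ m : ℕ, N < m → q m = 0)
    (hA : growCoeff q w N = 0) : Summable fun n : ℤ => jost q w n ^ 2 := by
  have hw0 : w ≠ 0 := by positivity
  have hdecay : ∀ t, jostSeq q w (N + t) = w⁻¹ ^ t * jostSeq q w N := by
    intro t
    induction t with
    | zero => simp
    | succ t ih =>
      have hAt : growCoeff q w (N + t) = 0 := by
        rw [(coeff_add_of_forall_eq_zero hw0 fun m h _ => hq m h).1, hA, mul_zero]
      rw [growCoeff, sub_eq_zero] at hAt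
      rw [← add_assoc, hAt, ih]
      ring
  have hr : Summable fun t : ℕ => (w⁻¹ ^ 2) ^ t :=
    summable_geometric_of_lt_one (by positivity) (by
      rw [inv_pow]
      exact inv_lt_one_of_one_lt₀ (one_lt_pow₀ hw two_ne_zero))
  apply Summable.of_nat_of_neg
  · rw [← summable_nat_add_iff N]
    refine (hr.mul_left (jostSeq q w N ^ 2)).congr fun t => ?_
    rw [jost_natCast, add_comm, hdecay]
    ring
  · refine hr.congr fun m => ?_
    rw [jost_of_nonpos (by omega), zpow_neg, zpow_natCast, ← inv_pow, ← pow_mul, ← pow_mul,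
      mul_comm]

theorem isL2Eigenfunction_jost (hw : 1 < w) {N : ℕ} (hq₀ : ∀ n ≤ 0, q n = 0)
    (hqN : ∀ m : ℕ, N < m → q m = 0) (hA : growCoeff q w N = 0) :
    IsL2Eigenfunction q (2 - w - w⁻¹) (jost q w) where
  ne_zero h := by simpa [jost, jostSeq] using congrFun h 0
  summable_sq := summable_jost_sq hw hqN hA
  apply_eq := jost_apply_eq (by positivity) hq₀

theorem continuousOn_growCoeff (q : ℤ → ℝ) (n : ℕ) :
    ContinuousOn (fun w => growCoeff q w n) {0}ᶜ := by
  have hinv : ContinuousOn (fun w : ℝ => w⁻¹) {0}ᶜ := continuousOn_inv₀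
  have hseq : ∀ n, ContinuousOn (fun w => jostSeq q w n) {0}ᶜ ∧
      ContinuousOn (fun w => jostSeq q w (n + 1)) {0}ᶜ := by
    intro n
    induction n with
    | zero => exact ⟨continuousOn_const, continuousOn_id⟩
    | succ n ih =>
      refine ⟨ih.2, ?_⟩
      simp only [jostSeq]
      exact (((continuousOn_id.add hinv).sub continuousOn_const).mul ih.2).sub ih.1
  exact (hseq n).2.sub (hinv.mul (hseq n).1)

end Jost

def wells (D k : ℕ) (v : ℕ → ℝ) (n : ℤ) : ℝ :=
  ∑ i ∈ Finset.range k, if n = i * D + 1 then v i else 0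

section Wells

variable {D k : ℕ} {v : ℕ → ℝ}

theorem wells_apply_site (hD : 0 < D) {i : ℕ} (hi : i < k) : wells D k v (i * D + 1) = v i := by
  rw [wells, Finset.sum_eq_single_of_mem i (Finset.mem_range.2 hi), if_pos rfl]
  intro j _ hji
  rw [if_neg]
  intro h
  have : (j * D : ℤ) = i * D := by linarith
  exact hji (Nat.eq_of_mul_eq_mul_right hD (by exact_mod_cast this))

theorem wells_eq_zero {n : ℤ} (hn : ∀ i < k, n ≠ i * D + 1) : wells D k v n = 0 :=
  Finset.sum_eq_zero fun i hi => if_neg (hn i (Finset.mem_range.1 hi))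

theorem wells_eq_zero_of_nonpos {n : ℤ} (hn : n ≤ 0) : wells D k v n = 0 :=
  wells_eq_zero fun i _ h => by
    nlinarith [(Nat.cast_nonneg i : (0 : ℤ) ≤ i), (Nat.cast_nonneg D : (0 : ℤ) ≤ D)]

theorem wells_eq_zero_of_lt_of_le {i m : ℕ} (h₁ : i * D + 1 < m) (h₂ : m ≤ (i + 1) * D) :
    wells D k v m = 0 :=
  wells_eq_zero fun j _ h => by
    have h' : m = j * D + 1 := by exact_mod_cast h
    have hij : i < j := Nat.lt_of_mul_lt_mul_right (a := D) (by omega)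
    have hji : j < i + 1 := Nat.lt_of_mul_lt_mul_right (a := D) (by rw [add_mul] at h₂ ⊢; omega)
    omega

theorem wells_eq_zero_of_lt (hD : 0 < D) {m : ℕ} (hm : k * D < m) : wells D k v m = 0 :=
  wells_eq_zero fun i hi h => by
    have h' : m = i * D + 1 := by exact_mod_cast h
    have : (i + 1) * D ≤ k * D := Nat.mul_le_mul_right D hi
    rw [add_mul] at this
    omega

theorem wells_nonneg (hv : ∀ i, 0 ≤ v i) (n : ℤ) : 0 ≤ wells D k v n :=
  Finset.sum_nonneg fun i _ => by split_ifs <;> simp [hv]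

theorem finite_support_wells : (Function.support (wells D k v)).Finite := by
  refine ((Finset.range k).image fun i : ℕ => (i * D + 1 : ℤ)).finite_toSet.subset fun n hn => ?_
  by_contra h
  simp only [Finset.coe_image, Finset.coe_range, Set.mem_image, Set.mem_Iio, not_exists,
    not_and] at h
  exact hn (wells_eq_zero fun i hi e => h i hi e.symm)

end Wells

theorem sign_add_eq_of_abs_lt {x y : ℝ} (h : |y| < |x|) :
    SignType.sign (x + y) = SignType.sign x := by
  rcases lt_trichotomy x 0 with hx | rfl | hx
  · rw [abs_of_neg hx] at h
    rw [sign_neg hx, sign_neg (by linarith [le_abs_self y])]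
  · exact absurd h (by simp)
  · rw [abs_of_pos hx] at h
    rw [sign_pos hx, sign_pos (by linarith [neg_abs_le y])]

theorem abs_add_le_abs_mul_of_crossing {w v A B : ℝ} (hw : 2 ≤ w) (hv : 0 ≤ v)
    (hsep : 1 / 2 ≤ |w - w⁻¹ - v|) (hvB : v * |B| ≤ |A|) :
    |v * w⁻¹ * B| + w * |A| / 4 ≤ |w * (w - w⁻¹ - v) * A| := by
  have hwinv : w⁻¹ ≤ w / 4 := by
    rw [inv_le_iff_one_le_mul₀ (by linarith)]
    nlinarith
  rw [abs_mul, abs_mul, abs_mul, abs_mul, abs_of_nonneg hv, abs_of_pos (by linarith : 0 < w),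
    abs_of_pos (by positivity : 0 < w⁻¹)]
  nlinarith [mul_le_mul_of_nonneg_left hsep (by positivity : 0 ≤ w * |A|),
    mul_le_mul_of_nonneg_left hvB (by positivity : 0 ≤ w⁻¹), abs_nonneg A]

theorem sign_and_abs_le_of_crossing {w v V A B A' B' : ℝ} (hw : 2 ≤ w) (hv : 0 ≤ v)
    (hvV : v ≤ V) (hV : 1 ≤ V) (hsep : 1 / 2 ≤ |w - w⁻¹ - v|) (hB : V * |B| ≤ |A|)
    (hA' : (w - w⁻¹) * A' = w * (w - w⁻¹ - v) * A - v * w⁻¹ * B)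
    (hB' : (w - w⁻¹) * B' = v * w * A + w⁻¹ * (w - w⁻¹ + v) * B) :
    SignType.sign A' = SignType.sign (w - w⁻¹ - v) * SignType.sign A ∧ |B'| ≤ 8 * V * |A'| := by
  have hwinv0 : 0 < w⁻¹ := by positivity
  have hwinv : w⁻¹ ≤ 1 / 2 := by rw [inv_le_comm₀ (by linarith) (by norm_num)]; linarith
  have hu : 0 < w - w⁻¹ := by linarith
  have hBA : |B| ≤ |A| := by nlinarith [abs_nonneg B]
  have hdom := abs_add_le_abs_mul_of_crossing hw hv hsep (by nlinarith [abs_nonneg B])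
  have hA'low : w * |A| / 4 ≤ (w - w⁻¹) * |A'| := by
    rw [← abs_of_pos hu, ← abs_mul, hA']
    linarith [abs_sub_abs_le_abs_sub (w * (w - w⁻¹ - v) * A) (v * w⁻¹ * B)]
  have hB'up : (w - w⁻¹) * |B'| ≤ 2 * V * w * |A| := by
    rw [← abs_of_pos hu, ← abs_mul, hB']
    refine (abs_add_le _ _).trans ?_
    rw [abs_mul, abs_mul, abs_mul, abs_mul, abs_of_nonneg hv, abs_of_pos (by linarith : 0 < w),
      abs_of_pos hwinv0, abs_of_pos (by linarith : 0 < w - w⁻¹ + v)]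
    have h1 : v * w * |A| ≤ V * w * |A| := by gcongr
    have h2 : w⁻¹ * (w - w⁻¹ + v) * |B| = (1 - w⁻¹ ^ 2) * |B| + w⁻¹ * (v * |B|) := by
      field_simp
    have h3 : w⁻¹ * (v * |B|) ≤ |A| := by nlinarith [abs_nonneg B]
    have h4 : 2 * |A| ≤ V * w * |A| := by gcongr; nlinarith
    nlinarith [abs_nonneg B]
  refine ⟨?_, le_of_mul_le_mul_left (by nlinarith [abs_nonneg A]) hu⟩
  rcases eq_or_ne A 0 with rfl | hA
  · have hB0 : B = 0 := abs_eq_zero.1 (by rw [abs_zero] at hB; nlinarith [abs_nonneg B])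
    have hA'0 : A' = 0 := by simpa [hB0, hu.ne'] using hA'
    simp [hA'0]
  · have hlt : |-(v * w⁻¹ * B)| < |w * (w - w⁻¹ - v) * A| := by
      rw [abs_neg]
      nlinarith [abs_pos.2 hA]
    have key := sign_add_eq_of_abs_lt hlt
    rwa [← sub_eq_add_neg, ← hA', sign_mul, sign_mul, sign_mul, sign_pos hu,
      sign_pos (by linarith : 0 < w), one_mul, one_mul] at key

theorem sign_growCoeff_wells {D k : ℕ} {v : ℕ → ℝ} {w V : ℝ} (hD : 0 < D) (hw : 2 ≤ w)
    (hV : 1 ≤ V) (hv : ∀ i < k, 0 ≤ v i ∧ v i ≤ V) (hsep : ∀ i < k, 1 / 2 ≤ |w - w⁻¹ - v i|)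
    (hDV : 8 * V ^ 2 ≤ 4 ^ (D - 1)) {i : ℕ} (hi : i ≤ k) :
    SignType.sign (growCoeff (wells D k v) w (i * D))
        = ∏ l ∈ Finset.range i, SignType.sign (w - w⁻¹ - v l) ∧
      V * |decayCoeff (wells D k v) w (i * D)| ≤ |growCoeff (wells D k v) w (i * D)| := by
  have hw0 : w ≠ 0 := by positivity
  induction i with
  | zero =>
    have hu : 0 < w - w⁻¹ := by
      linarith [(inv_lt_one_of_one_lt₀ (by linarith : 1 < w)).trans (by linarith : 1 < w)]
    simp [growCoeff, decayCoeff, jostSeq, sign_pos hu]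
  | succ i ih =>
    obtain ⟨ihA, ihB⟩ := ih (by omega)
    set q := wells D k v
    set n := i * D
    have hqn : q (n + 1) = v i := by
      simpa [q, n] using wells_apply_site (v := v) hD (show i < k by omega)
    obtain ⟨hA1, hB1⟩ := sub_inv_mul_coeff_succ (q := q) hw0 n
    rw [hqn] at hA1 hB1
    obtain ⟨hsign, hratio⟩ := sign_and_abs_le_of_crossing hw (hv i (by omega)).1
      (hv i (by omega)).2 hV (hsep i (by omega)) ihB hA1 hB1
    have hfree := coeff_add_of_forall_eq_zero (q := q) hw0 (n := n + 1) (t := D - 1)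
      fun m h₁ h₂ => wells_eq_zero_of_lt_of_le h₁ (by rw [add_mul]; omega)
    rw [show (i + 1) * D = n + 1 + (D - 1) by rw [add_mul]; omega, hfree.1, hfree.2,
      Finset.prod_range_succ, sign_mul, sign_pow, sign_pos (by linarith : 0 < w), one_pow,
      one_mul, hsign, ihA, mul_comm, abs_mul, abs_mul, abs_pow, abs_pow,
      abs_of_pos (by linarith : 0 < w), abs_of_pos (by positivity : 0 < w⁻¹)]
    refine ⟨rfl, ?_⟩
    have hp : 0 < w ^ (D - 1) := by positivity
    have hp2 : 8 * V ^ 2 ≤ (w ^ (D - 1)) ^ 2 := hDV.trans <| by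
      rw [← pow_mul, mul_comm, pow_mul]
      exact pow_le_pow_left₀ (by norm_num) (by nlinarith) _
    rw [inv_pow, ← div_eq_inv_mul, mul_div_assoc', div_le_iff₀ hp]
    nlinarith [mul_le_mul_of_nonneg_left hratio (by linarith : 0 ≤ V),
      mul_le_mul_of_nonneg_right hp2 (abs_nonneg (growCoeff q w (n + 1)))]

theorem sub_inv_sub_sub_inv {a b : ℝ} (ha : a ≠ 0) (hb : b ≠ 0) :
    a - a⁻¹ - (b - b⁻¹) = (a - b) * (1 + (a * b)⁻¹) := by
  field_simp
  ring

theorem sign_sub_inv_sub_sub_inv {a b : ℝ} (ha : 0 < a) (hb : 0 < b) :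
    SignType.sign (a - a⁻¹ - (b - b⁻¹)) = SignType.sign (a - b) := by
  rw [sub_inv_sub_sub_inv ha.ne' hb.ne', sign_mul,
    sign_pos (show 0 < 1 + (a * b)⁻¹ by positivity), mul_one]

theorem abs_sub_le_abs_sub_inv_sub_sub_inv {a b : ℝ} (ha : 0 < a) (hb : 0 < b) :
    |a - b| ≤ |a - a⁻¹ - (b - b⁻¹)| := by
  rw [sub_inv_sub_sub_inv ha.ne' hb.ne', abs_mul]
  exact le_mul_of_one_le_right (abs_nonneg _)
    (by rw [abs_of_pos (by positivity)]; linarith [inv_pos.2 (mul_pos ha hb)])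

theorem sign_growCoeff_wells_eq_prod {D k : ℕ} {W : ℕ → ℝ} {V x : ℝ} (hD : 0 < D)
    (hW : ∀ i < k, 5 / 2 ≤ W i ∧ W i ≤ V) (hV : 1 ≤ V) (hDV : 8 * V ^ 2 ≤ 4 ^ (D - 1))
    (hx : 2 ≤ x) (hxW : ∀ i < k, 1 / 2 ≤ |x - W i|) :
    SignType.sign (growCoeff (wells D k fun i => W i - (W i)⁻¹) x (k * D))
      = ∏ l ∈ Finset.range k, SignType.sign (x - W l) := by
  have hWpos : ∀ i < k, 0 < W i := fun i hi => by linarith [hW i hi]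
  have hv : ∀ i < k, 0 ≤ W i - (W i)⁻¹ ∧ W i - (W i)⁻¹ ≤ V := fun i hi => by
    have : (W i)⁻¹ ≤ 1 := inv_le_one_of_one_le₀ (by linarith [hW i hi])
    have := inv_pos.2 (hWpos i hi)
    constructor <;> linarith [hW i hi]
  rw [(sign_growCoeff_wells hD hx hV hv (fun i hi => (hxW i hi).trans
    (abs_sub_le_abs_sub_inv_sub_sub_inv (by linarith) (hWpos i hi))) hDV le_rfl).1]
  exact Finset.prod_congr rfl fun l hl =>
    sign_sub_inv_sub_sub_inv (by linarith) (hWpos l (Finset.mem_range.1 hl))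

theorem exists_eq_zero_of_mul_neg {f : ℝ → ℝ} {a b : ℝ} (hab : a ≤ b)
    (hf : ContinuousOn f (Set.Icc a b)) (hfab : f a * f b < 0) : ∃ x ∈ Set.Icc a b, f x = 0 := by
  rw [← Set.uIcc_of_le hab] at hf ⊢
  have hzero : (0 : ℝ) ∈ Set.uIcc (f a) (f b) := by
    rcases mul_neg_iff.1 hfab with ⟨h1, h2⟩ | ⟨h1, h2⟩
    · exact Set.mem_uIcc.2 (Or.inr ⟨h2.le, h1.le⟩)
    · exact Set.mem_uIcc.2 (Or.inl ⟨h1.le, h2.le⟩)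
  exact intermediate_value_uIcc hf hzero

theorem exists_growCoeff_wells_eq_zero {D k : ℕ} {W : ℕ → ℝ} {V : ℝ} (hD : 0 < D)
    (hW : ∀ i < k, 5 / 2 ≤ W i ∧ W i ≤ V)
    (hWsep : ∀ i < k, ∀ j < k, i ≠ j → 1 ≤ |W i - W j|) (hDV : 8 * V ^ 2 ≤ 4 ^ (D - 1))
    {j : ℕ} (hj : j < k) :
    ∃ w ∈ Set.Icc (W j - 1 / 2) (W j + 1 / 2),
      growCoeff (wells D k fun i => W i - (W i)⁻¹) w (k * D) = 0 := by
  have hWj := hW j hj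
  have hsign := fun x => sign_growCoeff_wells_eq_prod (x := x) hD hW (by linarith) hDV
  have hfar : ∀ s : ℝ, |s| = 1 / 2 → ∀ i < k, 1 / 2 ≤ |W j + s - W i| := by
    intro s hs i hi
    rcases eq_or_ne i j with rfl | hij
    · simp [hs]
    · have := abs_sub_abs_le_abs_sub (W j - W i) (-s)
      rw [abs_neg, show W j - W i - -s = W j + s - W i by ring] at this
      linarith [hWsep j hj i hi hij.symm]
  refine exists_eq_zero_of_mul_neg (by linarith)
    ((continuousOn_growCoeff _ _).mono fun x hx => ne_of_gt (by linarith [hx.1]))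
    (sign_eq_neg_one_iff.1 ?_)
  rw [sign_mul, hsign _ (by linarith) (by simpa [sub_eq_add_neg] using hfar (-(1 / 2)) (by norm_num)),
    hsign _ (by linarith) (hfar (1 / 2) (by norm_num)), ← Finset.prod_mul_distrib,
    Finset.prod_eq_single_of_mem j (Finset.mem_range.2 hj) fun l hl hlj => ?_, ← sign_mul]
  · exact sign_neg (by nlinarith)
  · rw [← sign_mul]
    apply sign_pos
    have := hWsep j hj l (Finset.mem_range.1 hl) hlj.symm
    nlinarith [sq_abs (W j - W l), abs_nonneg (W j - W l)]

/- The `j`-th well alone would have the eigenvalue `2 - W_j - W_j⁻¹`, `W_j = 8 + 2 j`; the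
separation `D` gives `8 V ^ 2 ≤ 4 ^ (D - 1)` for `V = 2 n + 8`. -/
def guidedPotential (n : ℕ) : ℤ → ℝ :=
  wells (8 * (2 * n + 8) ^ 2 + 1) (n + 1) fun i => (8 + 2 * i : ℝ) - (8 + 2 * i : ℝ)⁻¹

theorem guidedPotential_nonneg (n : ℕ) (m : ℤ) : 0 ≤ guidedPotential n m :=
  wells_nonneg (fun i => by
    have hi : (0 : ℝ) ≤ i := Nat.cast_nonneg i
    exact sub_nonneg.2 <| (inv_le_one_of_one_le₀ (by linarith)).trans (by linarith)) m

theorem exists_eigenvalue_guidedPotential {n j : ℕ} (hj : j ≤ n) :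
    ∃ E ∈ Set.Icc (-7 - 2 * (j : ℝ)) (-5 - 2 * j),
      ∃ ψ, IsL2Eigenfunction (guidedPotential n) E ψ := by
  have hD : 0 < 8 * (2 * n + 8) ^ 2 + 1 := by omega
  have hW : ∀ i < n + 1, 5 / 2 ≤ (8 + 2 * i : ℝ) ∧ (8 + 2 * i : ℝ) ≤ 2 * n + 8 := fun i hi => by
    have : (i : ℝ) ≤ n := by exact_mod_cast Nat.lt_succ_iff.1 hi
    constructor <;> linarith [(Nat.cast_nonneg i : (0 : ℝ) ≤ i)]
  have hsep : ∀ i < n + 1, ∀ l < n + 1, i ≠ l → 1 ≤ |(8 + 2 * i : ℝ) - (8 + 2 * l)| := by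
    intro i _ l _ hil
    rcases Nat.lt_or_gt_of_ne hil with h | h
    · have : (i : ℝ) + 1 ≤ l := by exact_mod_cast h
      rw [abs_of_neg (by linarith)]
      linarith
    · have : (l : ℝ) + 1 ≤ i := by exact_mod_cast h
      rw [abs_of_pos (by linarith)]
      linarith
  have hDV : 8 * (2 * n + 8 : ℝ) ^ 2 ≤ 4 ^ (8 * (2 * n + 8) ^ 2 + 1 - 1) := by
    rw [Nat.add_sub_cancel]
    exact_mod_cast (Nat.lt_pow_self (by norm_num : 1 < 4)).le
  obtain ⟨w, hw, hA⟩ := exists_growCoeff_wells_eq_zero hD hW hsep hDV (Nat.lt_succ_of_le hj)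
  have hw2 : 2 ≤ w := by linarith [hw.1, (Nat.cast_nonneg j : (0 : ℝ) ≤ j)]
  have hwinv : w⁻¹ ≤ 1 / 2 := by rw [inv_le_comm₀ (by linarith) (by norm_num)]; linarith
  have hwinv0 : 0 < w⁻¹ := by positivity
  exact ⟨2 - w - w⁻¹, ⟨by linarith [hw.2], by linarith [hw.1]⟩, jost (guidedPotential n) w,
    isL2Eigenfunction_jost (by linarith) (fun m hm => wells_eq_zero_of_nonpos hm)
      (fun m hm => wells_eq_zero_of_lt hD hm) hA⟩

theorem exists_mem_Icc_of_forall_le_add {e : ℕ → ℝ} {L : ℝ} {n : ℕ}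
    (h : ∀ j < n, e j ≤ e (j + 1) + L) {x : ℝ} (hx : x ∈ Set.Icc (e n) (e 0 + L)) :
    ∃ j ≤ n, x ∈ Set.Icc (e j) (e j + L) := by
  induction n with
  | zero => exact ⟨0, le_rfl, hx⟩
  | succ n ih =>
    by_cases hxn : x ≤ e (n + 1) + L
    · exact ⟨n + 1, le_rfl, hx.1, hxn⟩
    · obtain ⟨j, hj, hxj⟩ := ih (fun j hj => h j (by omega))
        ⟨by linarith [h n (by omega)], hx.2⟩
      exact ⟨j, by omega, hxj⟩

end GuidedSpectrum

open GuidedSpectrum in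
theorem guided_spectrum_measure_large_general (C : ℝ) :
    ∃ q : ℤ → ℝ, (∀ n, 0 ≤ q n) ∧ (Function.support q).Finite ∧
      ∀ H : lp (fun _ : ℤ × ℤ => ℂ) 2 →L[ℂ] lp (fun _ : ℤ × ℤ => ℂ) 2,
        (∀ (f : lp (fun _ : ℤ × ℤ => ℂ) 2) (m₁ m₂ : ℤ),
          H f (m₁, m₂) = 4 * f (m₁, m₂) - f (m₁ + 1, m₂) - f (m₁ - 1, m₂)
            - f (m₁, m₂ + 1) - f (m₁, m₂ - 1) - (q m₂ : ℂ) * f (m₁, m₂)) →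
        ENNReal.ofReal C <
          MeasureTheory.volume ({x : ℝ | (x : ℂ) ∈ spectrum ℂ H} ∩ Set.Iio 0) := by
  set n := ⌈C⌉₊
  refine ⟨guidedPotential n, guidedPotential_nonneg n, finite_support_wells, fun H hH => ?_⟩
  choose! E hE ψ hψ using fun j (hj : j ≤ n) => exists_eigenvalue_guidedPotential (n := n) hj
  have hE0 := hE 0 (Nat.zero_le n)
  have hEn := hE n le_rfl
  rw [Nat.cast_zero] at hE0
  have hsub : Set.Icc (E n) (E 0 + 4) ⊆ {x : ℝ | (x : ℂ) ∈ spectrum ℂ H} ∩ Set.Iio 0 := by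
    intro x hx
    obtain ⟨j, hj, hxj⟩ := exists_mem_Icc_of_forall_le_add (fun j hj => by
      have := (hE j hj.le).2
      have := (hE (j + 1) hj).1
      push_cast at *
      linarith) hx
    exact ⟨Icc_subset_spectrum_of_isL2Eigenfunction hH (hψ j hj) hxj,
      Set.mem_Iio.2 (by linarith [hx.2, hE0.2])⟩
  calc ENNReal.ofReal C < ENNReal.ofReal (E 0 + 4 - E n) := by
        rw [ENNReal.ofReal_lt_ofReal_iff (by linarith [hE0.1, hEn.2])]
        linarith [hE0.1, hEn.2, Nat.le_ceil C]
    _ = MeasureTheory.volume (Set.Icc (E n) (E 0 + 4)) := Real.volume_Icc.symm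
    _ ≤ _ := MeasureTheory.measure_mono hsub

/-- Corollary 4.2(i) on the square lattice: for any `C > 0` there is a nonnegative finitely
supported guided potential `q` such that the negative part of the real spectrum of the
associated guided Schrödinger operator has Lebesgue measure exceeding `C`. -/
theorem guided_spectrum_measure_large (C : ℝ) (hC : 0 < C) :
    ∃ q : ℤ → ℝ, (∀ n, 0 ≤ q n) ∧ (Function.support q).Finite ∧
      ∀ H : lp (fun _ : ℤ × ℤ => ℂ) 2 →L[ℂ] lp (fun _ : ℤ × ℤ => ℂ) 2,
        (∀ (f : lp (fun _ : ℤ × ℤ => ℂ) 2) (m₁ m₂ : ℤ),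
          H f (m₁, m₂) = 4 * f (m₁, m₂) - f (m₁ + 1, m₂) - f (m₁ - 1, m₂)
            - f (m₁, m₂ + 1) - f (m₁, m₂ - 1) - (q m₂ : ℂ) * f (m₁, m₂)) →
        ENNReal.ofReal C <
          MeasureTheory.volume ({x : ℝ | (x : ℂ) ∈ spectrum ℂ H} ∩ Set.Iio 0) :=
  guided_spectrum_measure_large_general C
end
end
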